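/- arXiv:1405.6574 — 7 statements merged into one kernel-verified Lean document; each statement's English description precedes it below -/
import Mathlib

section
/- Let n ≥ 1 be an integer and ω a complex number with ω^n = 1 (so ω ≠ 0 and integer powers ω^k are defined for all k ∈ ℤ). Define φ(a,b,c) = ω^{(⌊(a+b)/n⌋ − ⌊a/n⌋ − ⌊b/n⌋)·c} and β(a,b) = ω^{−(⌊a/n⌋ + ⌊−a/n⌋)·b} for integers a,b,c. Then for all a,b,c ∈ ℤ: φ(a,b,c) · φ(−a,−b,−c)^{−1} = β(b,c) · β(a+b,c)^{−1} · β(a,b+c) · β(a,b)^{−1}. -/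
/-- The explicit coboundary identity showing that the 3-cocycle
`φ(a,b,c) = ω^{(⌊(a+b)/n⌋ − ⌊a/n⌋ − ⌊b/n⌋)·c}` on `ℤ/nℤ` and its pullback under inversion
are cohomologous, via the 2-cochain `β(a,b) = ω^{−(⌊a/n⌋ + ⌊−a/n⌋)·b}`. -/
theorem stmt0 (n : ℤ) (hn : 1 ≤ n) (ω : ℂ) (hω : ω ^ n = 1)
    (φ : ℤ → ℤ → ℤ → ℂ)
    (hφ : ∀ a b c : ℤ, φ a b c = ω ^ (((a + b).fdiv n - a.fdiv n - b.fdiv n) * c))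
    (β : ℤ → ℤ → ℂ)
    (hβ : ∀ a b : ℤ, β a b = ω ^ (-(a.fdiv n + (-a).fdiv n) * b))
    (a b c : ℤ) :
    φ a b c * (φ (-a) (-b) (-c))⁻¹
      = β b c * (β (a + b) c)⁻¹ * β a (b + c) * (β a b)⁻¹ := by
  have hω0 : ω ≠ 0 := by
    intro h
    rw [h, zero_zpow n (by omega)] at hω
    exact one_ne_zero hω.symm
  have hab : (-a) + (-b) = -(a + b) := by ring
  rw [hφ, hφ, hβ, hβ, hβ, hβ, hab, ← zpow_neg, ← zpow_neg, ← zpow_neg,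
    ← zpow_add₀ hω0, ← zpow_add₀ hω0, ← zpow_add₀ hω0, ← zpow_add₀ hω0]
  congr 1
  ring
end

section
/- Let R be a commutative ring and H a bialgebra over R with comultiplication Δ : H → H ⊗ H. Let c be an invertible element of H ⊗ H such that (i) the four elements c ⊗ 1, 1 ⊗ c, (Δ ⊗ id)(c), (id ⊗ Δ)(c) of H ⊗ H ⊗ H pairwise commute, and (ii) the element ∂c := (1 ⊗ c)·(id ⊗ Δ)(c)·((Δ ⊗ id)(c))^{−1}·(c ⊗ 1)^{−1} is central in H ⊗ H ⊗ H. Define the twisted comultiplication Δ_c(x) = c·Δ(x)·c^{−1}. Let E be an invertible element of H ⊗ H such that E·Δ_c(x) = Δ_c(x)·E for every x ∈ H, and put F = c^{−1}·E·c. Then (E ⊗ 1)·(Δ_c ⊗ id)(E) = (1 ⊗ E)·(id ⊗ Δ_c)(E) holds if and only if (F ⊗ 1)·(Δ ⊗ id)(F) = (1 ⊗ F)·(id ⊗ Δ)(F) holds. -/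
open scoped TensorProduct

noncomputable section

variable (R H : Type*) [CommRing R] [Ring H] [Bialgebra R H]

/-- `Δ ⊗ id` as an algebra homomorphism `H ⊗ H → (H ⊗ H) ⊗ H`. -/
def deltaLeft : H ⊗[R] H →ₐ[R] (H ⊗[R] H) ⊗[R] H :=
  Algebra.TensorProduct.map (Bialgebra.comulAlgHom R H) (AlgHom.id R H)

/-- `id ⊗ Δ` as an algebra homomorphism `H ⊗ H → (H ⊗ H) ⊗ H`. -/
def deltaRight : H ⊗[R] H →ₐ[R] (H ⊗[R] H) ⊗[R] H :=
  ((Algebra.TensorProduct.assoc R R R H H H).symm.toAlgHom).comp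
    (Algebra.TensorProduct.map (AlgHom.id R H) (Bialgebra.comulAlgHom R H))

/-- `x ↦ x ⊗ 1` as an algebra homomorphism `H ⊗ H → (H ⊗ H) ⊗ H` (legs 1,2). -/
def leg12 : H ⊗[R] H →ₐ[R] (H ⊗[R] H) ⊗[R] H :=
  Algebra.TensorProduct.includeLeft

/-- `x ↦ 1 ⊗ x` as an algebra homomorphism `H ⊗ H → (H ⊗ H) ⊗ H` (legs 2,3). -/
def leg23 : H ⊗[R] H →ₐ[R] (H ⊗[R] H) ⊗[R] H :=
  ((Algebra.TensorProduct.assoc R R R H H H).symm.toAlgHom).comp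
    Algebra.TensorProduct.includeRight

/-! Invariance of `E` under `Δ_c` makes `F = c⁻¹ E c` invariant under `Δ`, so `F ⊗ 1` commutes
with `(Δ ⊗ id)(c)` and `1 ⊗ F` with `(id ⊗ Δ)(c)`. Writing `E ⊗ 1 = (c ⊗ 1)(F ⊗ 1)(c ⊗ 1)⁻¹` and
similarly for `1 ⊗ E`, both sides of the twisted cocycle equation become conjugates of the two
sides of the untwisted one, by `(c ⊗ 1)(Δ ⊗ id)(c)` and by `(1 ⊗ c)(id ⊗ Δ)(c)` respectively;
these differ by the central factor `∂c`, so the two equations are equivalent. -/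

section Conjugation

variable {M : Type*} [Monoid M]

theorem Units.commute_inv_mul_mul_of_commute_mul_mul_inv (u : Mˣ) {x y : M}
    (h : Commute x (↑u * y * ↑u⁻¹)) : Commute (↑u⁻¹ * x * ↑u) y := by
  have := congrArg (fun t => (↑u⁻¹ : M) * t * ↑u) h.eq
  simpa [Commute, SemiconjBy, mul_assoc] using this

theorem Units.conj_mul_conj_of_commute (g k : Mˣ) (x y : M)
    (h : Commute (↑g⁻¹ * x * ↑g) ↑k) :
    ↑(g * k) * ((↑g⁻¹ * x * ↑g) * (↑k⁻¹ * y * ↑k)) * ↑(g * k)⁻¹ = x * (↑g * y * ↑g⁻¹) := by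
  calc ↑(g * k) * ((↑g⁻¹ * x * ↑g) * (↑k⁻¹ * y * ↑k)) * ↑(g * k)⁻¹
      = ↑g * (↑k * ((↑g⁻¹ * x * ↑g) * ↑k⁻¹)) * y * ↑g⁻¹ := by simp [mul_assoc]
    _ = x * (↑g * y * ↑g⁻¹) := by rw [h.units_inv_right.eq]; simp [mul_assoc]

theorem Units.conj_mul_of_forall_commute (u w : Mˣ) (hu : ∀ z : M, Commute z ↑u) (z : M) :
    ↑(u * w) * z * ↑(u * w)⁻¹ = ↑w * z * ↑w⁻¹ := by
  calc ↑(u * w) * z * ↑(u * w)⁻¹ = ↑u * (↑w * z * ↑w⁻¹) * ↑u⁻¹ := by simp [mul_assoc]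
    _ = ↑w * z * ↑w⁻¹ := by rw [← (hu _).eq]; simp [mul_assoc]

theorem Units.twisted_cocycle_iff (a b d e : Mˣ) (X Y DL DR : M)
    (hX : Commute (↑a⁻¹ * X * ↑a) ↑d) (hY : Commute (↑b⁻¹ * Y * ↑b) ↑e)
    (hcent : ∀ z : M, Commute z ↑(b * e * d⁻¹ * a⁻¹)) :
    X * (↑a * DL * ↑a⁻¹) = Y * (↑b * DR * ↑b⁻¹) ↔
      (↑a⁻¹ * X * ↑a) * (↑d⁻¹ * DL * ↑d) = (↑b⁻¹ * Y * ↑b) * (↑e⁻¹ * DR * ↑e) := by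
  have hbe : b * e = b * e * d⁻¹ * a⁻¹ * (a * d) := by group
  rw [← Units.conj_mul_conj_of_commute a d X DL hX, ← Units.conj_mul_conj_of_commute b e Y DR hY,
    hbe, Units.conj_mul_of_forall_commute _ _ hcent, Units.mul_left_inj, Units.mul_right_inj]

end Conjugation

theorem Algebra.TensorProduct.commute_tmul_map {R A B C D : Type*} [CommSemiring R]
    [Semiring A] [Semiring B] [Semiring C] [Semiring D] [Algebra R A] [Algebra R B]
    [Algebra R C] [Algebra R D] {f : A →ₐ[R] C} {g : B →ₐ[R] D} {p : C} {q : D}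
    (hp : ∀ x, Commute p (f x)) (hq : ∀ y, Commute q (g y)) (z : A ⊗[R] B) :
    Commute (p ⊗ₜ q) (Algebra.TensorProduct.map f g z) := by
  induction z using TensorProduct.induction_on with
  | zero => simp
  | tmul x y => simpa using (hp x).tmul (hq y)
  | add z w hz hw => simpa using hz.add_right hw

theorem stmt1 (c cinv E : H ⊗[R] H)
    (hc : c * cinv = 1) (hc' : cinv * c = 1)
    -- (ii) `∂c = (1 ⊗ c)·(id ⊗ Δ)(c)·((Δ ⊗ id)(c))⁻¹·(c ⊗ 1)⁻¹` is central
    (hcent : ∀ z : (H ⊗[R] H) ⊗[R] H,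
      Commute z (leg23 R H c * deltaRight R H c * deltaLeft R H cinv * leg12 R H cinv))
    -- `E` commutes with `Δ_c(x)` for all `x`
    (hEinv : ∀ x : H,
      E * (c * Bialgebra.comulAlgHom R H x * cinv)
        = (c * Bialgebra.comulAlgHom R H x * cinv) * E) :
    -- `(E ⊗ 1)·(Δ_c ⊗ id)(E) = (1 ⊗ E)·(id ⊗ Δ_c)(E)`
    (leg12 R H E * (leg12 R H c * deltaLeft R H E * leg12 R H cinv)
        = leg23 R H E * (leg23 R H c * deltaRight R H E * leg23 R H cinv))
      ↔
    -- `(F ⊗ 1)·(Δ ⊗ id)(F) = (1 ⊗ F)·(id ⊗ Δ)(F)` for `F = c⁻¹ E c`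
    (leg12 R H (cinv * E * c) * deltaLeft R H (cinv * E * c)
        = leg23 R H (cinv * E * c) * deltaRight R H (cinv * E * c)) := by
  let u : (H ⊗[R] H)ˣ := ⟨c, cinv, hc, hc'⟩
  have hF : ∀ x, Commute (cinv * E * c) (Bialgebra.comulAlgHom R H x) := fun x =>
    u.commute_inv_mul_mul_of_commute_mul_mul_inv (hEinv x)
  have hX : Commute (leg12 R H cinv * leg12 R H E * leg12 R H c) (deltaLeft R H c) := by
    rw [← map_mul, ← map_mul]
    exact Algebra.TensorProduct.commute_tmul_map hF (fun _ => Commute.one_left _) c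
  have hY : Commute (leg23 R H cinv * leg23 R H E * leg23 R H c) (deltaRight R H c) := by
    rw [← map_mul, ← map_mul]
    exact (Algebra.TensorProduct.commute_tmul_map (fun _ => Commute.one_left _) hF c).map
      (Algebra.TensorProduct.assoc R R R H H H).symm.toAlgHom
  simp only [map_mul]
  exact Units.twisted_cocycle_iff (u.map (leg12 R H : _ →* _)) (u.map (leg23 R H : _ →* _))
    (u.map (deltaLeft R H : _ →* _)) (u.map (deltaRight R H : _ →* _)) (leg12 R H E) (leg23 R H E)
    (deltaLeft R H E) (deltaRight R H E) hX hY hcent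

end
end

section
/- Let m ≥ 1 and let f : ℤ^m × ℤ^m → 𝕋 be a bicharacter, i.e. f(x+x′,y) = f(x,y)·f(x′,y) and f(x,y+y′) = f(x,y)·f(x,y′) for all x,x′,y,y′ ∈ ℤ^m. Then f is symmetric (f(x,y) = f(y,x) for all x,y) if and only if f is a 2-coboundary, i.e. there exists a function e : ℤ^m → 𝕋 with f(x,y) = e(x)·e(y)·e(x+y)^{−1} for all x,y ∈ ℤ^m. -/
/-!
In coordinates a bicharacter of `ℤ^m` is `f x y = ∏ᵢ ∏ⱼ cᵢⱼ ^ (xᵢ yⱼ)` with `cᵢⱼ = f(eᵢ, eⱼ)`.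
If `f` is symmetric, so is `c`, and since every element of `𝕋` is a square we can split
`cᵢⱼ = dᵢⱼ dⱼᵢ` (take `cᵢⱼ` above the diagonal, `1` below it and a square root of `cᵢᵢ` on it).
The bicharacter `g` with matrix `d` then satisfies `f x y = g x y * g y x`, and expanding
`g (x + y) (x + y)` shows that `x ↦ (g x x)⁻¹` has coboundary `f`.
-/

section Bicharacter

variable {ι A M : Type*} [CommGroup M]

theorem inv_diag_coboundary_eq_mul_swap [Add A] {g : A → A → M}
    (hg₁ : ∀ x x' y, g (x + x') y = g x y * g x' y)
    (hg₂ : ∀ x y y', g x (y + y') = g x y * g x y') (x y : A) :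
    (g x x)⁻¹ * (g y y)⁻¹ * ((g (x + y) (x + y))⁻¹)⁻¹ = g x y * g y x := by
  rw [inv_inv, hg₁, hg₂, hg₂, ← mul_inv, inv_mul_eq_iff_eq_mul]
  ac_rfl

theorem map_sum_zsmul_of_map_add [AddCommGroup A] {h : A → M}
    (hh : ∀ a b, h (a + b) = h a * h b) (s : Finset ι) (n : ι → ℤ) (v : ι → A) :
    h (∑ i ∈ s, n i • v i) = ∏ i ∈ s, h (v i) ^ n i := by
  let φ : A →+ Additive M := AddMonoidHom.mk' (fun a => .ofMul (h a)) hh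
  calc h (∑ i ∈ s, n i • v i) = (φ (∑ i ∈ s, n i • v i)).toMul := rfl
    _ = ∏ i ∈ s, (φ (v i)).toMul ^ n i := by
      simp only [map_sum, map_zsmul, toMul_sum, toMul_zsmul]

def bicharOfMatrix [Fintype ι] (d : ι → ι → M) (x y : ι → ℤ) : M :=
  ∏ i, ∏ j, d i j ^ (x i * y j)

variable [Fintype ι]

theorem bicharOfMatrix_add_left (d : ι → ι → M) (x x' y : ι → ℤ) :
    bicharOfMatrix d (x + x') y = bicharOfMatrix d x y * bicharOfMatrix d x' y := by
  simp only [bicharOfMatrix, ← Finset.prod_mul_distrib, Pi.add_apply, add_mul, zpow_add]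

theorem bicharOfMatrix_add_right (d : ι → ι → M) (x y y' : ι → ℤ) :
    bicharOfMatrix d x (y + y') = bicharOfMatrix d x y * bicharOfMatrix d x y' := by
  simp only [bicharOfMatrix, ← Finset.prod_mul_distrib, Pi.add_apply, mul_add, zpow_add]

theorem bicharOfMatrix_mul_swap (d : ι → ι → M) (x y : ι → ℤ) :
    bicharOfMatrix d x y * bicharOfMatrix d y x =
      bicharOfMatrix (fun i j => d i j * d j i) x y := by
  have hswap : bicharOfMatrix d y x = ∏ i, ∏ j, d j i ^ (x i * y j) := by
    rw [bicharOfMatrix, Finset.prod_comm]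
    simp only [mul_comm]
  rw [hswap, bicharOfMatrix, bicharOfMatrix]
  simp only [← Finset.prod_mul_distrib, mul_zpow]

theorem eq_bicharOfMatrix [DecidableEq ι] {f : (ι → ℤ) → (ι → ℤ) → M}
    (hf₁ : ∀ x x' y, f (x + x') y = f x y * f x' y)
    (hf₂ : ∀ x y y', f x (y + y') = f x y * f x y') (x y : ι → ℤ) :
    f x y = bicharOfMatrix (fun i j => f (Pi.single i 1) (Pi.single j 1)) x y := by
  conv_lhs => rw [pi_eq_sum_univ' x, map_sum_zsmul_of_map_add (h := (f · y)) (hf₁ · · y)]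
  refine Finset.prod_congr rfl fun i _ => ?_
  conv_lhs =>
    rw [pi_eq_sum_univ' y, map_sum_zsmul_of_map_add (h := f _) (hf₂ _), ← Finset.prod_zpow]
  simp only [← zpow_mul, mul_comm (y _)]

end Bicharacter

theorem exists_mul_swap_eq_of_symm {ι M : Type*} [LinearOrder ι] [CommGroup M] {c : ι → ι → M}
    (hdiag : ∀ i, IsSquare (c i i)) (hc : ∀ i j, c i j = c j i) :
    ∃ d : ι → ι → M, ∀ i j, d i j * d j i = c i j := by
  choose r hr using hdiag
  refine ⟨fun i j => if i < j then c i j else if i = j then r i else 1, fun i j => ?_⟩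
  rcases lt_trichotomy i j with h | rfl | h
  · simp [h, h.not_gt, h.ne']
  · simp [hr]
  · simp [h, h.not_gt, h.ne', hc i j]

theorem Circle.isSquare (z : Circle) : IsSquare z :=
  ⟨Circle.exp (Complex.arg z / 2), by rw [← Circle.exp_add, add_halves, Circle.exp_arg]⟩

theorem stmt2_general (m : ℕ) (f : (Fin m → ℤ) → (Fin m → ℤ) → Circle)
    (hf₁ : ∀ x x' y, f (x + x') y = f x y * f x' y)
    (hf₂ : ∀ x y y', f x (y + y') = f x y * f x y') :
    (∀ x y, f x y = f y x) ↔
      ∃ e : (Fin m → ℤ) → Circle, ∀ x y, f x y = e x * e y * (e (x + y))⁻¹ := by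
  constructor
  · intro hsym
    obtain ⟨d, hd⟩ := exists_mul_swap_eq_of_symm (fun i => Circle.isSquare _)
      fun i j => hsym (Pi.single i 1) (Pi.single j 1)
    refine ⟨fun x => (bicharOfMatrix d x x)⁻¹, fun x y => ?_⟩
    rw [inv_diag_coboundary_eq_mul_swap (bicharOfMatrix_add_left d) (bicharOfMatrix_add_right d),
      bicharOfMatrix_mul_swap, eq_bicharOfMatrix hf₁ hf₂]
    simp only [hd]
  · rintro ⟨e, he⟩ x y
    rw [he, he, add_comm y, mul_comm (e y)]

/-- A `𝕋`-valued bicharacter on `ℤ^m` is symmetric if and only if it is a 2-coboundary. -/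
theorem stmt2 (m : ℕ) (hm : 1 ≤ m) (f : (Fin m → ℤ) → (Fin m → ℤ) → Circle)
    (hf₁ : ∀ x x' y, f (x + x') y = f x y * f x' y)
    (hf₂ : ∀ x y y', f x (y + y') = f x y * f x y') :
    (∀ x y, f x y = f y x) ↔
      ∃ e : (Fin m → ℤ) → Circle, ∀ x y, f x y = e x * e y * (e (x + y))⁻¹ :=
  stmt2_general m f hf₁ hf₂
end

section
/- Let n ≥ 3 be an odd integer. For all i ≠ j in {1,…,n}, putting X_{i,j} = {1,…,n}∖{i,j}, one has (−1)^{i + j + I_{n+i}(X_{i,j}) + I_{n+j}({i})} = (−1)^{(n+1)/2}. -/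
/-- `I₁(X) = Σ_{k∈X} k − |X|·n`. -/
def I1 (n : ℕ) (X : Finset ℕ) : ℤ := (∑ k ∈ X, (k : ℤ)) - X.card * n

/-- `I_{n+i}(X) = I₁(X) + |{k ∈ X : k < i}| − (n−1)`. -/
def Ihigh (n i : ℕ) (X : Finset ℕ) : ℤ :=
  I1 n X + ((X.filter (fun k => k < i)).card : ℤ) - ((n : ℤ) - 1)

/-- The sign identity `(−1)^{i+j+I_{n+i}(X_{i,j})+I_{n+j}({i})} = (−1)^{(n+1)/2}`
for odd `n ≥ 3` and `i ≠ j` in `{1,…,n}`, where `X_{i,j} = {1,…,n} ∖ {i,j}`. -/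
theorem stmt6 (n : ℕ) (hn : 3 ≤ n) (hodd : Odd n) (i j : ℕ)
    (hi : i ∈ Finset.Icc 1 n) (hj : j ∈ Finset.Icc 1 n) (hij : i ≠ j) :
    (-1 : ℂ) ^ ((i : ℤ) + (j : ℤ) + Ihigh n i ((Finset.Icc 1 n) \ {i, j}) + Ihigh n j {i})
      = (-1 : ℂ) ^ (((n : ℤ) + 1) / 2) := by
  obtain ⟨m, hm⟩ := hodd
  obtain ⟨hi1, hi2⟩ := Finset.mem_Icc.mp hi
  obtain ⟨hj1, hj2⟩ := Finset.mem_Icc.mp hj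
  -- Gauss sum
  have hT : (∑ k ∈ Finset.Icc 1 n, (k : ℤ)) = (m + 1) * (2 * m + 1) := by
    have h1 : (∑ k ∈ Finset.range (n + 1), k) * 2 = (n + 1) * n :=
      by simpa using Finset.sum_range_id_mul_two (n + 1)
    have h2 : (∑ k ∈ Finset.Icc 1 n, k) = ∑ k ∈ Finset.range (n + 1), k := by
      rw [Finset.range_eq_Ico, ← Finset.Ico_add_one_right_eq_Icc]
      rw [Finset.sum_eq_sum_Ico_succ_bot (by omega : 0 < n + 1)]
      simp
    have h3 : (∑ k ∈ Finset.Icc 1 n, k) * 2 = (n + 1) * n := by rw [h2, h1]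
    have := congrArg (fun x : ℕ => (x : ℤ)) h3
    push_cast at this
    push_cast
    nlinarith [this]
  have hsub : ({i, j} : Finset ℕ) ⊆ Finset.Icc 1 n := by
    intro k hk
    simp only [Finset.mem_insert, Finset.mem_singleton] at hk
    rcases hk with rfl | rfl <;> exact Finset.mem_Icc.mpr ⟨by omega, by omega⟩
  have hcardij : ({i, j} : Finset ℕ).card = 2 := by
    rw [Finset.card_insert_of_notMem (by simpa using hij), Finset.card_singleton]
  have hcardX : ((Finset.Icc 1 n) \ {i, j}).card = n - 2 := by
    rw [Finset.card_sdiff_of_subset hsub, hcardij, Nat.card_Icc]; omega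
  have hsumX : (∑ k ∈ (Finset.Icc 1 n) \ {i, j}, (k : ℤ))
      = (m + 1) * (2 * m + 1) - i - j := by
    rw [Finset.sum_sdiff_eq_sub hsub, hT]
    rw [Finset.sum_insert (by simpa using hij), Finset.sum_singleton]
    ring
  -- filter counts
  have hf1 : (((Finset.Icc 1 n) \ {i, j}).filter (fun k => k < i)).card
      = (i - 1) - (if j < i then 1 else 0) := by
    have : ((Finset.Icc 1 n) \ {i, j}).filter (fun k => k < i)
        = (Finset.Ico 1 i) \ {j} := by
      ext k
      simp only [Finset.mem_filter, Finset.mem_sdiff, Finset.mem_Icc, Finset.mem_Ico,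
        Finset.mem_insert, Finset.mem_singleton]
      omega
    rw [this]
    by_cases h : j < i
    · rw [Finset.card_sdiff_of_subset (by simp [Finset.mem_Ico]; omega), Nat.card_Ico]
      simp [h]
    · rw [Finset.sdiff_eq_self_of_disjoint (by simp [Finset.mem_Ico]; omega)]
      simp [h, Nat.card_Ico]
  have hf2 : (({i} : Finset ℕ).filter (fun k => k < j)).card
      = (if i < j then 1 else 0) := by
    by_cases h : i < j <;> simp [Finset.filter_singleton, h]
  -- exponent value
  set E : ℤ := (i : ℤ) + (j : ℤ) + Ihigh n i ((Finset.Icc 1 n) \ {i, j}) + Ihigh n j {i} with hE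
  have hEval : E = (m + 1) + 2 * ((i : ℤ) - m * m - 2 * m - 1
      + (if i < j then 1 else 0)) := by
    rw [hE]
    simp only [Ihigh, I1, hsumX, hcardX, hf1, hf2, Finset.sum_singleton,
      Finset.card_singleton]
    have hn2 : ((n - 2 : ℕ) : ℤ) = (n : ℤ) - 2 := by push_cast [hm]; omega
    have hi1' : (1 : ℤ) ≤ i := by exact_mod_cast hi1
    rw [hn2]
    by_cases h : i < j
    · have hji : ¬ j < i := by omega
      have : ((i - 1 - (if j < i then 1 else 0) : ℕ) : ℤ) = (i : ℤ) - 1 := by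
        simp [hji]; omega
      rw [this]
      simp only [h, if_pos, hm]
      push_cast
      ring
    · have hji : j < i := by omega
      have : ((i - 1 - (if j < i then 1 else 0) : ℕ) : ℤ) = (i : ℤ) - 2 := by
        simp [hji]; omega
      rw [this]
      simp only [h, if_neg, hm, if_false]
      push_cast
      ring
  have hhalf : ((n : ℤ) + 1) / 2 = m + 1 := by
    have : (n : ℤ) = 2 * m + 1 := by exact_mod_cast congrArg (Nat.cast : ℕ → ℤ) hm
    omega
  rw [hhalf, hEval, zpow_add₀ (by norm_num : (-1 : ℂ) ≠ 0), zpow_mul]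
  norm_num
end

section
/- Let n ≥ 3 be an odd integer. Put v = Σ_{i=1}^n e_{{i}} ⊗ ẽ_{n+i} and w = Σ_{j=1}^n ẽ_{n+j} ⊗ e_{{j}}, both elements of S ⊗ S ⊗ S, and equip S ⊗ S ⊗ S with the inner product making the vectors e_A ⊗ e_B ⊗ e_C (A,B,C ⊆ {1,…,n}) orthonormal. Then ⟨v, w⟩ = (−1)^{(n+1)/2} · n · (n−1). -/
open scoped Classical

noncomputable section

/-- Subsets of `{1,…,n}`, the index set for the basis of the spinor space `S`. -/
abbrev SIdx (n : ℕ) : Type := {X : Finset ℕ // X ∈ (Finset.Icc 1 n).powerset}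

/-- The coefficient of `e_{X′} ⊗ e_{X″}` in
`ẽ_{n+i} = (−1)^i Σ_{(X′,X″)∈Ω_{n+i}} σ_{n+i}(X′) e_{X′} ⊗ e_{X″}`, where `Ω_{n+i}` consists
of pairs of disjoint sets with `X′ ∪ X″ = {1,…,n} ∖ {i}` and `|X′|` odd, and
`σ_{n+i}(X) = (−1)^{I_{n+i}(X)}`. -/
def tildeCoef (n i : ℕ) (X' X'' : Finset ℕ) : ℂ :=
  if X' ∪ X'' = (Finset.Icc 1 n) \ {i} ∧ Disjoint X' X'' ∧ Odd X'.card then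
    ((-1 : ℂ) ^ i) * ((-1 : ℂ) ^ (Ihigh n i X'))
  else 0

/-- `S ⊗ S ⊗ S` with the inner product making the `e_A ⊗ e_B ⊗ e_C` orthonormal. -/
abbrev T3 (n : ℕ) : Type := EuclideanSpace ℂ (SIdx n × SIdx n × SIdx n)

/-- `v = Σ_{i=1}^n e_{{i}} ⊗ ẽ_{n+i}` in coordinates w.r.t. the basis `e_A ⊗ e_B ⊗ e_C`. -/
def vVec (n : ℕ) : T3 n := WithLp.toLp 2 fun (p : SIdx n × SIdx n × SIdx n) =>
  ∑ i ∈ Finset.Icc 1 n,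
    if (p.1 : Finset ℕ) = {i} then tildeCoef n i (p.2.1 : Finset ℕ) (p.2.2 : Finset ℕ) else 0

/-- `w = Σ_{j=1}^n ẽ_{n+j} ⊗ e_{{j}}` in coordinates w.r.t. the basis `e_A ⊗ e_B ⊗ e_C`. -/
def wVec (n : ℕ) : T3 n := WithLp.toLp 2 fun (p : SIdx n × SIdx n × SIdx n) =>
  ∑ j ∈ Finset.Icc 1 n,
    if (p.2.2 : Finset ℕ) = {j} then tildeCoef n j (p.1 : Finset ℕ) (p.2.1 : Finset ℕ) else 0

/-!
Expanding both vectors, `⟨v, w⟩ = Σ_{i,j} Σ_B c_i(B, {j}) · c_j({i}, B)`, where `c_i` are the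
(real, `±1` or `0`) coefficients of `ẽ_{n+i}`. For `i = j` every term vanishes, since `{i}` would
have to lie in `{1,…,n} ∖ {i}`. For `i ≠ j` only `B = {1,…,n} ∖ {i, j}` survives, and Gauss' sum
shows that the total sign exponent is `≡ n(n+1)/2 ≡ (n+1)/2 (mod 2)` for odd `n`. The `n(n-1)`
ordered pairs `i ≠ j` then give the result.
-/

open Finset ComplexConjugate

/-- The paper's `Ω_{n+i}`. -/
def Omega (n i : ℕ) : Set (Finset ℕ × Finset ℕ) :=
  {p | p.1 ∪ p.2 = Icc 1 n \ {i} ∧ Disjoint p.1 p.2 ∧ Odd #p.1}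

section TildeCoef

variable {n i : ℕ} {X' X'' : Finset ℕ}

lemma conj_tildeCoef : conj (tildeCoef n i X' X'') = tildeCoef n i X' X'' := by
  unfold tildeCoef
  split_ifs <;> simp

lemma tildeCoef_of_mem_Omega (h : (X', X'') ∈ Omega n i) :
    tildeCoef n i X' X'' = (((i : ℤ) + Ihigh n i X').negOnePow : ℂ) := by
  rw [tildeCoef, if_pos (show _ ∧ _ ∧ _ from h), Int.cast_negOnePow, zpow_add₀ (by norm_num),
    zpow_natCast]

lemma tildeCoef_of_notMem_Omega (h : (X', X'') ∉ Omega n i) : tildeCoef n i X' X'' = 0 := by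
  rw [tildeCoef, if_neg (show ¬(_ ∧ _ ∧ _) from h)]

end TildeCoef

lemma notMem_Omega_singleton_self (n i : ℕ) (B : Finset ℕ) : (B, {i}) ∉ Omega n i :=
  fun ⟨hunion, _⟩ => by simpa using hunion.subset (mem_union_right B (mem_singleton_self i))

lemma eq_sdiff_pair_of_mem_Omega {n i j : ℕ} {B : Finset ℕ} (h : (B, {j}) ∈ Omega n i) :
    B = Icc 1 n \ {i, j} := by
  obtain ⟨hunion, hdisj, -⟩ : B ∪ {j} = _ ∧ Disjoint B {j} ∧ _ := h
  rw [← union_sdiff_cancel_right hdisj, hunion, sdiff_sdiff_left, sup_eq_union, ← insert_eq]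

/-- The contribution `⟨e_{i} ⊗ ẽ_{n+i}, ẽ_{n+j} ⊗ e_{j}⟩` to `⟨v, w⟩`. -/
def innerTerm (n i j : ℕ) : ℂ := ∑ B : SIdx n, tildeCoef n i B {j} * tildeCoef n j {i} B

lemma innerTerm_self (n i : ℕ) : innerTerm n i i = 0 := by
  simp [innerTerm, tildeCoef_of_notMem_Omega (notMem_Omega_singleton_self n i _)]

lemma inner_vVec_wVec (n : ℕ) :
    inner ℂ (vVec n) (wVec n) = ∑ i ∈ Icc 1 n, ∑ j ∈ Icc 1 n, innerTerm n i j := by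
  have hsingleton {i : ℕ} (hi : i ∈ Icc 1 n) : ({i} : Finset ℕ) ∈ (Icc 1 n).powerset :=
    mem_powerset.2 (singleton_subset_iff.2 hi)
  simp only [PiLp.inner_apply, RCLike.inner_apply', vVec, wVec, map_sum,
    apply_ite conj, map_zero, conj_tildeCoef, sum_mul_sum]
  rw [Finset.sum_comm]
  refine sum_congr rfl fun i hi => ?_
  rw [Finset.sum_comm]
  refine sum_congr rfl fun j hj => ?_
  rw [Fintype.sum_prod_type, Fintype.sum_eq_single ⟨{i}, hsingleton hi⟩ fun A hA => ?_]
  · rw [Fintype.sum_prod_type]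
    refine Fintype.sum_congr _ _ fun B => ?_
    rw [Fintype.sum_eq_single ⟨{j}, hsingleton hj⟩ fun C hC => ?_]
    · simp
    · have : (C : Finset ℕ) ≠ {j} := fun h => hC (Subtype.ext h)
      simp [this]
  · have : (A : Finset ℕ) ≠ {i} := fun h => hA (Subtype.ext h)
    simp [this]

lemma sum_Icc_one_natCast_mul_two (n : ℕ) : (∑ k ∈ Icc 1 n, (k : ℤ)) * 2 = n * (n + 1) := by
  induction n with
  | zero => simp
  | succ n ih => rw [sum_Icc_succ_top (by omega), add_mul, ih]; push_cast; ring

section PairComplement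

variable {n i j : ℕ}

lemma pair_subset_Icc (hi : i ∈ Icc 1 n) (hj : j ∈ Icc 1 n) : ({i, j} : Finset ℕ) ⊆ Icc 1 n := by
  simp [insert_subset_iff, hi, hj]

lemma card_Icc_sdiff_pair (hi : i ∈ Icc 1 n) (hj : j ∈ Icc 1 n) (hne : i ≠ j) :
    #(Icc 1 n \ {i, j}) = n - 2 := by
  rw [card_sdiff_of_subset (pair_subset_Icc hi hj), card_pair hne, Nat.card_Icc,
    Nat.add_sub_cancel]

lemma sum_Icc_sdiff_pair (hi : i ∈ Icc 1 n) (hj : j ∈ Icc 1 n) (hne : i ≠ j) :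
    ∑ k ∈ Icc 1 n \ {i, j}, (k : ℤ) = ∑ k ∈ Icc 1 n, (k : ℤ) - i - j := by
  rw [sum_sdiff_eq_sub (pair_subset_Icc hi hj), sum_pair hne, sub_sub]

lemma card_filter_lt_Icc_sdiff_pair (hi : i ∈ Icc 1 n) (hj : j ∈ Icc 1 n) :
    (#((Icc 1 n \ {i, j}).filter (· < i)) : ℤ) + (if j < i then 1 else 0) = i - 1 := by
  simp only [mem_Icc] at hi hj
  have hfilter : (Icc 1 n \ {i, j}).filter (· < i) = (Ico 1 i).erase j := by
    ext k
    simp only [mem_filter, mem_sdiff, mem_Icc, mem_insert, mem_singleton, mem_erase, mem_Ico]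
    omega
  rw [hfilter]
  split_ifs with hji
  · rw [card_erase_of_mem (by simp only [mem_Ico]; omega), Nat.card_Ico]
    omega
  · rw [erase_eq_of_notMem (by simp only [mem_Ico]; omega), Nat.card_Ico]
    omega

lemma sdiff_pair_singleton_mem_Omega (hi : i ∈ Icc 1 n) (hj : j ∈ Icc 1 n) (hne : i ≠ j)
    (hodd : Odd n) : (Icc 1 n \ {i, j}, {j}) ∈ Omega n i := by
  obtain ⟨hi₁, hi₂⟩ := mem_Icc.1 hi
  obtain ⟨hj₁, hj₂⟩ := mem_Icc.1 hj
  refine ⟨?_, by simp, ?_⟩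
  · ext k
    simp only [mem_union, mem_sdiff, mem_Icc, mem_insert, mem_singleton]
    omega
  · rw [card_Icc_sdiff_pair hi hj hne]
    exact Nat.Odd.sub_even (by omega) hodd even_two

lemma singleton_sdiff_pair_mem_Omega (hi : i ∈ Icc 1 n) (hne : i ≠ j) :
    ({i}, Icc 1 n \ {i, j}) ∈ Omega n j := by
  simp only [mem_Icc] at hi
  refine ⟨?_, by simp, by simp⟩
  ext k
  simp only [mem_union, mem_sdiff, mem_Icc, mem_insert, mem_singleton]
  omega

lemma even_innerTerm_exponent (hi : i ∈ Icc 1 n) (hj : j ∈ Icc 1 n) (hne : i ≠ j)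
    (hodd : Odd n) :
    Even ((i : ℤ) + Ihigh n i (Icc 1 n \ {i, j}) + (j + Ihigh n j {i}) - ((n + 1) / 2 : ℕ)) := by
  have hsum := sum_Icc_sdiff_pair hi hj hne
  have hgauss := sum_Icc_one_natCast_mul_two n
  have hcard := card_Icc_sdiff_pair hi hj hne
  have hlt := card_filter_lt_Icc_sdiff_pair hi hj
  have hlt' : (#(({i} : Finset ℕ).filter (· < j)) : ℤ) = if i < j then 1 else 0 := by
    rw [filter_singleton]; split_ifs <;> simp
  obtain ⟨m, rfl⟩ := hodd
  have hcard' : (#(Icc 1 (2 * m + 1) \ {i, j}) : ℤ) = 2 * m - 1 := by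
    simp only [mem_Icc] at hi hj
    omega
  simp only [Ihigh, I1, hcard', card_singleton, sum_singleton, hlt', hsum, Int.even_iff]
  push_cast at hgauss ⊢
  have hprod₁ : (2 * (m : ℤ) - 1) * (2 * m + 1) = 4 * (m * m) - 1 := by ring
  have hprod₂ : (2 * (m : ℤ) + 1) * (2 * m + 1 + 1) = 4 * (m * m) + 6 * m + 2 := by ring
  rw [hprod₁]
  rw [hprod₂] at hgauss
  generalize (m : ℤ) * m = q at *
  split_ifs at hlt hlt' <;> omega

end PairComplement

lemma innerTerm_of_ne {n i j : ℕ} (hi : i ∈ Icc 1 n) (hj : j ∈ Icc 1 n) (hne : i ≠ j)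
    (hodd : Odd n) : innerTerm n i j = (-1 : ℂ) ^ ((n + 1) / 2) := by
  have hB₀ : Icc 1 n \ {i, j} ∈ (Icc 1 n).powerset := mem_powerset.2 sdiff_subset
  rw [innerTerm, Fintype.sum_eq_single ⟨_, hB₀⟩ fun B hB => ?_]
  · rw [tildeCoef_of_mem_Omega (sdiff_pair_singleton_mem_Omega hi hj hne hodd),
      tildeCoef_of_mem_Omega (singleton_sdiff_pair_mem_Omega hi hne), ← Int.cast_mul,
      ← Units.val_mul, ← Int.negOnePow_add, ← Int.cast_negOnePow_natCast]
    exact congrArg (fun u : ℤˣ => ((u : ℤ) : ℂ))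
      ((Int.negOnePow_eq_iff _ _).2 (even_innerTerm_exponent hi hj hne hodd))
  · rw [tildeCoef_of_notMem_Omega fun h => hB (Subtype.ext (eq_sdiff_pair_of_mem_Omega h)),
      zero_mul]

theorem stmt7_general (n : ℕ) (hodd : Odd n) :
    (inner ℂ (vVec n) (wVec n) : ℂ)
      = (-1 : ℂ) ^ ((n + 1) / 2) * (n : ℂ) * ((n : ℂ) - 1) := by
  have hrow : ∀ i ∈ Icc 1 n,
      ∑ j ∈ Icc 1 n, innerTerm n i j = (n - 1 : ℂ) * (-1) ^ ((n + 1) / 2) := by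
    intro i hi
    rw [← add_sum_erase _ _ hi, innerTerm_self, zero_add,
      sum_congr rfl fun j hj =>
        innerTerm_of_ne hi (mem_of_mem_erase hj) (ne_of_mem_erase hj).symm hodd,
      sum_const, card_erase_of_mem hi, Nat.card_Icc, nsmul_eq_mul, Nat.add_sub_cancel,
      Nat.cast_pred (by grind)]
  rw [inner_vVec_wVec, sum_congr rfl hrow, sum_const, Nat.card_Icc, nsmul_eq_mul]
  push_cast
  ring

/-- `⟨v, w⟩ = (−1)^{(n+1)/2} · n · (n−1)` (Proposition A.2). -/
theorem stmt7 (n : ℕ) (hn : 3 ≤ n) (hodd : Odd n) :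
    (inner ℂ (vVec n) (wVec n) : ℂ)
      = (-1 : ℂ) ^ ((n + 1) / 2) * (n : ℂ) * ((n : ℂ) - 1) :=
  stmt7_general n hodd

end
end

section
/- Let n ≥ 3 be an odd integer. The vector ẽ_1 = Σ_{(X′,X″)∈Ω_1} σ_1(X′) e_{X′} ⊗ e_{X″} ∈ S ⊗ S satisfies (X_i ⊗ id_S + id_S ⊗ X_i)(ẽ_1) = 0 for every i ∈ {1,…,n}; that is, ẽ_1 is a highest weight vector (of weight L_1) for the action of so(2n,ℂ) on U₊ ⊗ U₊. -/
open scoped TensorProduct Classical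

noncomputable section

/-- The spinor space `S`, with basis `(e_X)` indexed by subsets of `{1,…,n}`. -/
abbrev Sp (n : ℕ) : Type := SIdx n → ℂ

/-- The basis vector `e_X`. -/
def eB (n : ℕ) (X : SIdx n) : Sp n := Pi.single X 1

def eraseIdx (n : ℕ) (X : SIdx n) (i : ℕ) : SIdx n :=
  ⟨(X : Finset ℕ).erase i,
    Finset.mem_powerset.2 ((Finset.erase_subset _ _).trans (Finset.mem_powerset.1 X.2))⟩

def insertIdx (n : ℕ) (X : SIdx n) (i : ℕ) (h : i ∈ Finset.Icc 1 n) : SIdx n :=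
  ⟨insert i (X : Finset ℕ),
    Finset.mem_powerset.2 (Finset.insert_subset h (Finset.mem_powerset.1 X.2))⟩

/-- The creation operator `a_i†`: `a_i† e_X = (−1)^{|{k ∈ X : k < i}|} e_{X∪{i}}` if `i ∉ X`,
and `a_i† e_X = 0` otherwise. -/
def adag (n i : ℕ) : Sp n →ₗ[ℂ] Sp n where
  toFun f := fun X =>
    if i ∈ (X : Finset ℕ) then
      ((-1 : ℂ) ^ ((((X : Finset ℕ).erase i).filter (fun k => k < i)).card)) *
        f (eraseIdx n X i)
    else 0
  map_add' f g := by
    funext X; by_cases h : i ∈ (X : Finset ℕ) <;> simp [h] <;> ring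
  map_smul' a f := by
    funext X; by_cases h : i ∈ (X : Finset ℕ) <;> simp [h] <;> ring

/-- The annihilation operator `a_i`: `a_i e_X = (−1)^{|{k ∈ X : k < i}|} e_{X∖{i}}` if `i ∈ X`,
and `a_i e_X = 0` otherwise. -/
def aop (n i : ℕ) : Sp n →ₗ[ℂ] Sp n where
  toFun f := fun X =>
    if h : i ∈ Finset.Icc 1 n ∧ i ∉ (X : Finset ℕ) then
      ((-1 : ℂ) ^ (((insert i (X : Finset ℕ)).filter (fun k => k < i)).card)) *
        f (insertIdx n X i h.1)
    else 0
  map_add' f g := by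
    funext X
    by_cases h : i ∈ Finset.Icc 1 n ∧ i ∉ (X : Finset ℕ)
    · simp only [dif_pos h, Pi.add_apply, mul_add]
    · simp only [dif_neg h, Pi.add_apply, add_zero]
  map_smul' a f := by
    funext X
    by_cases h : i ∈ Finset.Icc 1 n ∧ i ∉ (X : Finset ℕ)
    · simp only [dif_pos h, Pi.smul_apply, smul_eq_mul, RingHom.id_apply]
      ring
    · simp only [dif_neg h, Pi.smul_apply, smul_eq_mul, RingHom.id_apply, mul_zero]

/-- The raising Chevalley generator: `X_i = −a_{i+1} a_i†` for `1 ≤ i ≤ n−1` and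
`X_n = a_n† a_{n−1}†`. -/
def Xop (n i : ℕ) : Sp n →ₗ[ℂ] Sp n :=
  if i = n then (adag n n).comp (adag n (n - 1))
  else -((aop n (i + 1)).comp (adag n i))

/-- `ẽ₁ = Σ_{(X′,X″)∈Ω₁} σ₁(X′) e_{X′} ⊗ e_{X″}` where `Ω₁` consists of pairs with
`X′ ∪ X″ = {1,…,n}`, `X′ ∩ X″ = {1}`, `|X′|` odd, and `σ₁(X) = (−1)^{I₁(X)}`. -/
def e1tilde (n : ℕ) : Sp n ⊗[ℂ] Sp n :=
  ∑ p ∈ Finset.univ.filter (fun p : SIdx n × SIdx n =>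
      (p.1 : Finset ℕ) ∪ (p.2 : Finset ℕ) = Finset.Icc 1 n ∧
      (p.1 : Finset ℕ) ∩ (p.2 : Finset ℕ) = {1} ∧ Odd (p.1 : Finset ℕ).card),
    ((-1 : ℂ) ^ (I1 n (p.1 : Finset ℕ))) • (eB n p.1 ⊗ₜ[ℂ] eB n p.2)


/-! ### Auxiliary lemmas -/

section Aux

variable {n : ℕ}

lemma coe_subset (X : SIdx n) : (X : Finset ℕ) ⊆ Finset.Icc 1 n :=
  Finset.mem_powerset.1 X.2

lemma mem_bounds {X : SIdx n} {k : ℕ} (h : k ∈ (X : Finset ℕ)) : 1 ≤ k ∧ k ≤ n := by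
  have := coe_subset X h
  simpa [Finset.mem_Icc] using this

lemma eB_apply (X Y : SIdx n) : eB n X Y = if Y = X then 1 else 0 := by
  simp [eB, Pi.single_apply]

lemma adag_apply (i : ℕ) (f : Sp n) (Y : SIdx n) :
    adag n i f Y = if i ∈ (Y : Finset ℕ) then
      ((-1 : ℂ) ^ ((((Y : Finset ℕ).erase i).filter (fun k => k < i)).card)) *
        f (eraseIdx n Y i)
    else 0 := rfl

lemma aop_apply (i : ℕ) (f : Sp n) (Y : SIdx n) :
    aop n i f Y = if h : i ∈ Finset.Icc 1 n ∧ i ∉ (Y : Finset ℕ) then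
      ((-1 : ℂ) ^ (((insert i (Y : Finset ℕ)).filter (fun k => k < i)).card)) *
        f (insertIdx n Y i h.1)
    else 0 := rfl

lemma adag_eB_of_mem {i : ℕ} {A : SIdx n} (h : i ∈ (A : Finset ℕ)) :
    adag n i (eB n A) = 0 := by
  funext Y
  rw [adag_apply, Pi.zero_apply]
  split_ifs with hY
  · have hne : eraseIdx n Y i ≠ A := by
      intro hE
      have : (A : Finset ℕ) = (Y : Finset ℕ).erase i := (congrArg Subtype.val hE).symm
      exact Finset.notMem_erase i (Y : Finset ℕ) (this ▸ h)
    rw [eB_apply, if_neg hne, mul_zero]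
  · rfl

lemma adag_eB {i : ℕ} {A : SIdx n} (h : i ∉ (A : Finset ℕ)) (A' : SIdx n)
    (hA' : (A' : Finset ℕ) = insert i (A : Finset ℕ)) :
    adag n i (eB n A) =
      ((-1 : ℂ) ^ (((A : Finset ℕ).filter (fun k => k < i)).card)) • eB n A' := by
  funext Y
  rw [adag_apply, Pi.smul_apply, eB_apply A' Y, smul_eq_mul]
  by_cases hY : Y = A'
  · have hiY : i ∈ (Y : Finset ℕ) := by
      rw [hY, hA']; exact Finset.mem_insert_self i _
    rw [if_pos hiY, if_pos hY, mul_one]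
    have hery : (Y : Finset ℕ).erase i = (A : Finset ℕ) := by
      rw [hY, hA', Finset.erase_insert h]
    have hE : eraseIdx n Y i = A := Subtype.ext hery
    rw [hE, eB_apply, if_pos rfl, mul_one, hery]
  · rw [if_neg hY, mul_zero]
    split_ifs with hiY
    · have hne : eraseIdx n Y i ≠ A := by
        intro hE
        apply hY
        apply Subtype.ext
        have : (Y : Finset ℕ).erase i = (A : Finset ℕ) := congrArg Subtype.val hE
        rw [hA', ← this, Finset.insert_erase hiY]
      rw [eB_apply, if_neg hne, mul_zero]
    · rfl

lemma aop_eB_of_not_mem {i : ℕ} {A : SIdx n} (h : i ∉ (A : Finset ℕ)) :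
    aop n i (eB n A) = 0 := by
  funext Y
  rw [aop_apply, Pi.zero_apply]
  split_ifs with hc
  · have hne : insertIdx n Y i hc.1 ≠ A := by
      intro hE
      apply h
      have : insert i (Y : Finset ℕ) = (A : Finset ℕ) := congrArg Subtype.val hE
      exact this ▸ Finset.mem_insert_self i _
    rw [eB_apply, if_neg hne, mul_zero]
  · rfl

lemma aop_eB {i : ℕ} {A : SIdx n} (h : i ∈ (A : Finset ℕ)) (A' : SIdx n)
    (hA' : (A' : Finset ℕ) = (A : Finset ℕ).erase i) :
    aop n i (eB n A) =
      ((-1 : ℂ) ^ (((A : Finset ℕ).filter (fun k => k < i)).card)) • eB n A' := by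
  funext Y
  rw [aop_apply, Pi.smul_apply, eB_apply A' Y, smul_eq_mul]
  by_cases hY : Y = A'
  · have hc : i ∈ Finset.Icc 1 n ∧ i ∉ (Y : Finset ℕ) := by
      refine ⟨coe_subset A h, ?_⟩
      rw [hY, hA']
      exact Finset.notMem_erase i _
    rw [dif_pos hc, if_pos hY, mul_one]
    have hins : insert i (Y : Finset ℕ) = (A : Finset ℕ) := by
      rw [hY, hA', Finset.insert_erase h]
    have hE : insertIdx n Y i hc.1 = A := Subtype.ext hins
    rw [hE, eB_apply, if_pos rfl, mul_one, hins]
  · rw [if_neg hY, mul_zero]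
    split_ifs with hc
    · have hne : insertIdx n Y i hc.1 ≠ A := by
        intro hE
        apply hY
        apply Subtype.ext
        have : insert i (Y : Finset ℕ) = (A : Finset ℕ) := congrArg Subtype.val hE
        rw [hA', ← this, Finset.erase_insert hc.2]
      rw [eB_apply, if_neg hne, mul_zero]
    · rfl

lemma Xop_mid_zero {i : ℕ} (hii : i ∈ Finset.Icc 1 n) (hne : i ≠ n) {A : SIdx n}
    (h : i ∈ (A : Finset ℕ) ∨ i + 1 ∉ (A : Finset ℕ)) :
    Xop n i (eB n A) = 0 := by
  rw [Xop, if_neg hne, LinearMap.neg_apply, LinearMap.comp_apply]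
  rcases h with h | h
  · rw [adag_eB_of_mem h, map_zero, neg_zero]
  · by_cases hiA : i ∈ (A : Finset ℕ)
    · rw [adag_eB_of_mem hiA, map_zero, neg_zero]
    · rw [adag_eB hiA (insertIdx n A i hii) rfl, map_smul,
        aop_eB_of_not_mem (show i + 1 ∉ (insertIdx n A i hii : Finset ℕ) by
          show i + 1 ∉ insert i (A : Finset ℕ)
          simp only [Finset.mem_insert, not_or]
          exact ⟨by omega, h⟩),
        smul_zero, neg_zero]

lemma Xop_mid {i : ℕ} (hii : i ∈ Finset.Icc 1 n) (hne : i ≠ n) {A : SIdx n}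
    (h1 : i ∉ (A : Finset ℕ)) (h2 : i + 1 ∈ (A : Finset ℕ)) (A' : SIdx n)
    (hA' : (A' : Finset ℕ) = insert i ((A : Finset ℕ).erase (i + 1))) :
    Xop n i (eB n A) = eB n A' := by
  rw [Xop, if_neg hne, LinearMap.neg_apply, LinearMap.comp_apply]
  rw [adag_eB h1 (insertIdx n A i hii) rfl, map_smul]
  have h2' : i + 1 ∈ (insertIdx n A i hii : Finset ℕ) := Finset.mem_insert_of_mem h2
  rw [aop_eB h2' A' (by
    show (A' : Finset ℕ) = (insert i (A : Finset ℕ)).erase (i + 1)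
    rw [hA', Finset.erase_insert_of_ne (by omega)])]
  have hflt : ((insertIdx n A i hii : Finset ℕ)).filter (fun k => k < i + 1)
      = insert i ((A : Finset ℕ).filter (fun k => k < i)) := by
    show (insert i (A : Finset ℕ)).filter (fun k => k < i + 1) = _
    ext k
    simp only [Finset.mem_insert, Finset.mem_filter]
    constructor
    · rintro ⟨hk | hk, hlt⟩
      · exact Or.inl hk
      · right
        refine ⟨hk, ?_⟩
        rcases Nat.lt_or_ge k i with h | h
        · exact h
        · exfalso; have : k = i := by omega
          exact h1 (this ▸ hk)
    · rintro (rfl | ⟨hk, hlt⟩)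
      · exact ⟨Or.inl rfl, by omega⟩
      · exact ⟨Or.inr hk, by omega⟩
  rw [hflt, Finset.card_insert_of_notMem (by
    simp only [Finset.mem_filter, not_and]
    intro hk
    omega)]
  rw [smul_smul, pow_succ, ← mul_assoc, ← mul_pow]
  norm_num

lemma Xop_top_zero (hn2 : 2 ≤ n) {A : SIdx n}
    (h : n - 1 ∈ (A : Finset ℕ) ∨ n ∈ (A : Finset ℕ)) :
    Xop n n (eB n A) = 0 := by
  rw [Xop, if_pos rfl, LinearMap.comp_apply]
  have hn1 : n - 1 ∈ Finset.Icc 1 n := by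
    simp only [Finset.mem_Icc]; omega
  rcases h with h | h
  · rw [adag_eB_of_mem h, map_zero]
  · by_cases h1 : n - 1 ∈ (A : Finset ℕ)
    · rw [adag_eB_of_mem h1, map_zero]
    · rw [adag_eB h1 (insertIdx n A (n - 1) hn1) rfl, map_smul,
        adag_eB_of_mem (show n ∈ (insertIdx n A (n - 1) hn1 : Finset ℕ) from
          Finset.mem_insert_of_mem h), smul_zero]

lemma Xop_top (hn2 : 2 ≤ n) {A : SIdx n}
    (h1 : n - 1 ∉ (A : Finset ℕ)) (h2 : n ∉ (A : Finset ℕ)) (A' : SIdx n)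
    (hA' : (A' : Finset ℕ) = insert n (insert (n - 1) (A : Finset ℕ))) :
    Xop n n (eB n A) = -eB n A' := by
  rw [Xop, if_pos rfl, LinearMap.comp_apply]
  have hn1 : n - 1 ∈ Finset.Icc 1 n := by
    simp only [Finset.mem_Icc]; omega
  rw [adag_eB h1 (insertIdx n A (n - 1) hn1) rfl, map_smul]
  have h2' : n ∉ (insertIdx n A (n - 1) hn1 : Finset ℕ) := by
    show n ∉ insert (n - 1) (A : Finset ℕ)
    simp only [Finset.mem_insert, not_or]
    exact ⟨by omega, h2⟩
  rw [adag_eB h2' A' (by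
    show (A' : Finset ℕ) = insert n (insert (n - 1) (A : Finset ℕ))
    exact hA')]
  have hc1 : (A : Finset ℕ).filter (fun k => k < n - 1) = (A : Finset ℕ) := by
    apply Finset.filter_eq_self.mpr
    intro k hk
    have hb := mem_bounds hk
    have e1 : k ≠ n - 1 := fun h => h1 (h ▸ hk)
    have e2 : k ≠ n := fun h => h2 (h ▸ hk)
    omega
  have hc2 : ((insertIdx n A (n - 1) hn1 : Finset ℕ)).filter (fun k => k < n)
      = insert (n - 1) (A : Finset ℕ) := by
    show (insert (n - 1) (A : Finset ℕ)).filter (fun k => k < n) = _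
    apply Finset.filter_eq_self.mpr
    intro k hk
    rcases Finset.mem_insert.1 hk with rfl | hk
    · omega
    · have hb := mem_bounds hk
      have e2 : k ≠ n := fun h => h2 (h ▸ hk)
      omega
  rw [hc1, hc2, Finset.card_insert_of_notMem h1, smul_smul, pow_succ, ← mul_assoc, ← mul_pow]
  norm_num

/-- Move: remove `rm`, insert `ad`. -/
def mv (n rm ad : ℕ) (X : SIdx n) : SIdx n :=
  if h : ad ∈ Finset.Icc 1 n then insertIdx n (eraseIdx n X rm) ad h else eraseIdx n X rm

lemma coe_mv {rm ad : ℕ} (h : ad ∈ Finset.Icc 1 n) (X : SIdx n) :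
    (mv n rm ad X : Finset ℕ) = insert ad ((X : Finset ℕ).erase rm) := by
  rw [mv, dif_pos h]; rfl

lemma mv_mv {rm ad : ℕ} (had : ad ∈ Finset.Icc 1 n) (hrm : rm ∈ Finset.Icc 1 n) {X : SIdx n}
    (h1 : rm ∈ (X : Finset ℕ)) (h2 : ad ∉ (X : Finset ℕ)) :
    mv n ad rm (mv n rm ad X) = X := by
  apply Subtype.ext
  rw [coe_mv hrm, coe_mv had,
    Finset.erase_insert (fun hc => h2 (Finset.mem_of_mem_erase hc)),
    Finset.insert_erase h1]

/-- Remove `n-1` and `n`. -/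
def mvD (n : ℕ) (X : SIdx n) : SIdx n := eraseIdx n (eraseIdx n X n) (n - 1)

lemma coe_mvD (X : SIdx n) :
    (mvD n X : Finset ℕ) = ((X : Finset ℕ).erase n).erase (n - 1) := rfl

/-- Insert `n-1` and `n`. -/
def mvI (n : ℕ) (X : SIdx n) : SIdx n :=
  if h : (n - 1) ∈ Finset.Icc 1 n ∧ n ∈ Finset.Icc 1 n then
    insertIdx n (insertIdx n X (n - 1) h.1) n h.2 else X

lemma coe_mvI (hn2 : 2 ≤ n) (X : SIdx n) :
    (mvI n X : Finset ℕ) = insert n (insert (n - 1) (X : Finset ℕ)) := by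
  rw [mvI, dif_pos ⟨by simp only [Finset.mem_Icc]; omega, by simp only [Finset.mem_Icc]; omega⟩]
  rfl

lemma I1_mid {i : ℕ} {A : Finset ℕ} (h1 : i ∉ A) (h2 : i + 1 ∈ A) :
    I1 n (insert i (A.erase (i + 1))) = I1 n A - 1 := by
  have hni : i ∉ A.erase (i + 1) := fun h => h1 (Finset.mem_of_mem_erase h)
  have hcpos : 1 ≤ A.card := Finset.card_pos.2 ⟨i + 1, h2⟩
  rw [I1, I1, Finset.sum_insert hni, Finset.card_insert_of_notMem hni,
    Finset.card_erase_of_mem h2, Finset.sum_erase_eq_sub h2, Nat.sub_add_cancel hcpos]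
  push_cast
  ring

lemma I1_mid' {i : ℕ} {A : Finset ℕ} (h1 : i ∈ A) (h2 : i + 1 ∉ A) :
    I1 n (insert (i + 1) (A.erase i)) = I1 n A + 1 := by
  have hni : i + 1 ∉ A.erase i := fun h => h2 (Finset.mem_of_mem_erase h)
  have hcpos : 1 ≤ A.card := Finset.card_pos.2 ⟨i, h1⟩
  rw [I1, I1, Finset.sum_insert hni, Finset.card_insert_of_notMem hni,
    Finset.card_erase_of_mem h1, Finset.sum_erase_eq_sub h1, Nat.sub_add_cancel hcpos]
  push_cast
  ring

lemma I1_top (hn2 : 2 ≤ n) {A : Finset ℕ} (h1 : n - 1 ∉ A) (h2 : n ∉ A) :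
    I1 n (insert n (insert (n - 1) A)) = I1 n A - 1 := by
  have hn2' : n ∉ insert (n - 1) A := by
    simp only [Finset.mem_insert, not_or]
    exact ⟨by omega, h2⟩
  rw [I1, I1, Finset.sum_insert hn2', Finset.sum_insert h1,
    Finset.card_insert_of_notMem hn2', Finset.card_insert_of_notMem h1]
  have hcast : ((n - 1 : ℕ) : ℤ) = (n : ℤ) - 1 := by omega
  rw [hcast]
  push_cast
  ring

lemma I1_top' (hn2 : 2 ≤ n) {A : Finset ℕ} (h1 : n - 1 ∈ A) (h2 : n ∈ A) :
    I1 n ((A.erase n).erase (n - 1)) = I1 n A + 1 := by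
  have h1' : n - 1 ∈ A.erase n := Finset.mem_erase.2 ⟨by omega, h1⟩
  have hc2 : 2 ≤ A.card := by
    have : ({n - 1, n} : Finset ℕ) ⊆ A := by
      intro k hk
      rcases Finset.mem_insert.1 hk with rfl | hk
      · exact h1
      · rwa [Finset.mem_singleton.1 hk]
    calc 2 = ({n - 1, n} : Finset ℕ).card := by
            rw [Finset.card_insert_of_notMem (by simp only [Finset.mem_singleton]; omega),
              Finset.card_singleton]
      _ ≤ A.card := Finset.card_le_card this
  rw [I1, I1, Finset.sum_erase_eq_sub h1', Finset.sum_erase_eq_sub h2,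
    Finset.card_erase_of_mem h1', Finset.card_erase_of_mem h2]
  have hcast : ((A.card - 1 - 1 : ℕ) : ℤ) = (A.card : ℤ) - 2 := by omega
  rw [hcast]
  have hcast2 : ((n - 1 : ℕ) : ℤ) = (n : ℤ) - 1 := by omega
  rw [hcast2]
  push_cast
  ring

lemma sign_sub_one (m : ℤ) : (-1 : ℂ) ^ (m - 1) = -((-1 : ℂ) ^ m) := by
  rw [zpow_sub₀ (by norm_num : (-1 : ℂ) ≠ 0), zpow_one, div_neg, div_one]

lemma sign_add_one (m : ℤ) : (-1 : ℂ) ^ (m + 1) = -((-1 : ℂ) ^ m) := by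
  rw [zpow_add₀ (by norm_num : (-1 : ℂ) ≠ 0), zpow_one, mul_neg, mul_one]

lemma mid_mem {i : ℕ} {A B : Finset ℕ} (hi1 : 1 ≤ i)
    (hU : A ∪ B = Finset.Icc 1 n) (hI : A ∩ B = {1}) (hin : i + 1 ≤ n)
    (h1 : i ∉ A) (h2 : i + 1 ∈ A) :
    insert i (A.erase (i + 1)) ∪ insert (i + 1) (B.erase i) = Finset.Icc 1 n ∧
    insert i (A.erase (i + 1)) ∩ insert (i + 1) (B.erase i) = {1} := by
  have h1A : 1 ∈ A ∧ 1 ∈ B :=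
    Finset.mem_inter.1 (by rw [hI]; exact Finset.mem_singleton_self 1)
  have hine1 : i ≠ 1 := fun h => h1 (h ▸ h1A.1)
  have hUk : ∀ k, k ∈ A ∨ k ∈ B ↔ 1 ≤ k ∧ k ≤ n := by
    intro k
    rw [← Finset.mem_union, hU, Finset.mem_Icc]
  have hIk : ∀ k, k ∈ A ∧ k ∈ B ↔ k = 1 := by
    intro k
    rw [← Finset.mem_inter, hI, Finset.mem_singleton]
  constructor
  · ext k
    simp only [Finset.mem_union, Finset.mem_insert, Finset.mem_erase, Finset.mem_Icc]
    constructor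
    · rintro ((rfl | ⟨hne, hk⟩) | (rfl | ⟨hne, hk⟩))
      · omega
      · exact (hUk k).1 (Or.inl hk)
      · omega
      · exact (hUk k).1 (Or.inr hk)
    · intro hk
      rcases (hUk k).2 hk with hkA | hkB
      · by_cases hk1 : k = i + 1
        · exact Or.inr (Or.inl hk1)
        · exact Or.inl (Or.inr ⟨hk1, hkA⟩)
      · by_cases hk0 : k = i
        · exact Or.inl (Or.inl hk0)
        · exact Or.inr (Or.inr ⟨hk0, hkB⟩)
  · ext k
    simp only [Finset.mem_inter, Finset.mem_insert, Finset.mem_erase, Finset.mem_singleton]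
    constructor
    · rintro ⟨rfl | ⟨hne1, hkA⟩, hr⟩
      · rcases hr with h | ⟨h, _⟩
        · omega
        · exact absurd rfl h
      · rcases hr with rfl | ⟨hne2, hkB⟩
        · exact absurd rfl hne1
        · exact (hIk k).1 ⟨hkA, hkB⟩
    · rintro rfl
      exact ⟨Or.inr ⟨by omega, h1A.1⟩, Or.inr ⟨by omega, h1A.2⟩⟩

lemma top_mem (hn3 : 3 ≤ n) {A B : Finset ℕ}
    (hU : A ∪ B = Finset.Icc 1 n) (hI : A ∩ B = {1})
    (h1 : n - 1 ∉ A) (h2 : n ∉ A) :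
    insert n (insert (n - 1) A) ∪ (B.erase n).erase (n - 1) = Finset.Icc 1 n ∧
    insert n (insert (n - 1) A) ∩ (B.erase n).erase (n - 1) = {1} := by
  have h1A : 1 ∈ A ∧ 1 ∈ B :=
    Finset.mem_inter.1 (by rw [hI]; exact Finset.mem_singleton_self 1)
  have hUk : ∀ k, k ∈ A ∨ k ∈ B ↔ 1 ≤ k ∧ k ≤ n := by
    intro k
    rw [← Finset.mem_union, hU, Finset.mem_Icc]
  have hIk : ∀ k, k ∈ A ∧ k ∈ B ↔ k = 1 := by
    intro k
    rw [← Finset.mem_inter, hI, Finset.mem_singleton]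
  constructor
  · ext k
    simp only [Finset.mem_union, Finset.mem_insert, Finset.mem_erase, Finset.mem_Icc]
    constructor
    · rintro ((rfl | rfl | hkA) | ⟨hne1, hne2, hkB⟩)
      · omega
      · omega
      · exact (hUk k).1 (Or.inl hkA)
      · exact (hUk k).1 (Or.inr hkB)
    · intro hk
      rcases (hUk k).2 hk with hkA | hkB
      · exact Or.inl (Or.inr (Or.inr hkA))
      · by_cases hkn : k = n
        · exact Or.inl (Or.inl hkn)
        · by_cases hkn1 : k = n - 1
          · exact Or.inl (Or.inr (Or.inl hkn1))
          · exact Or.inr ⟨hkn1, hkn, hkB⟩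
  · ext k
    simp only [Finset.mem_inter, Finset.mem_insert, Finset.mem_erase, Finset.mem_singleton]
    constructor
    · rintro ⟨rfl | rfl | hkA, hne1, hne2, hkB⟩
      · exact absurd rfl hne2
      · exact absurd rfl hne1
      · exact (hIk k).1 ⟨hkA, hkB⟩
    · rintro rfl
      exact ⟨Or.inr (Or.inr h1A.1), by omega, by omega, h1A.2⟩

/-- The summand of the combined sum over `Ω₁ × Bool`. -/
def Ft (n i : ℕ) (q : (SIdx n × SIdx n) × Bool) : Sp n ⊗[ℂ] Sp n :=
  ((-1 : ℂ) ^ (I1 n (q.1.1 : Finset ℕ))) •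
    (match q.2 with
     | true => eB n q.1.1 ⊗ₜ[ℂ] Xop n i (eB n q.1.2)
     | false => Xop n i (eB n q.1.1) ⊗ₜ[ℂ] eB n q.1.2)

lemma Ft_false (i : ℕ) (p : SIdx n × SIdx n) :
    Ft n i (p, false) = ((-1 : ℂ) ^ (I1 n (p.1 : Finset ℕ))) •
      (Xop n i (eB n p.1) ⊗ₜ[ℂ] eB n p.2) := rfl

lemma Ft_true (i : ℕ) (p : SIdx n × SIdx n) :
    Ft n i (p, true) = ((-1 : ℂ) ^ (I1 n (p.1 : Finset ℕ))) •
      (eB n p.1 ⊗ₜ[ℂ] Xop n i (eB n p.2)) := rfl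

/-- The involution for the case `i < n`. -/
def midmap (n i : ℕ) (q : (SIdx n × SIdx n) × Bool) : (SIdx n × SIdx n) × Bool :=
  match q.2 with
  | false =>
      if i ∉ (q.1.1 : Finset ℕ) ∧ i + 1 ∈ (q.1.1 : Finset ℕ) then
        ((mv n (i + 1) i q.1.1, mv n i (i + 1) q.1.2), true) else q
  | true =>
      if i ∉ (q.1.2 : Finset ℕ) ∧ i + 1 ∈ (q.1.2 : Finset ℕ) then
        ((mv n i (i + 1) q.1.1, mv n (i + 1) i q.1.2), false) else q

lemma midmap_false (i : ℕ) (p : SIdx n × SIdx n) :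
    midmap n i (p, false) =
      if i ∉ (p.1 : Finset ℕ) ∧ i + 1 ∈ (p.1 : Finset ℕ) then
        ((mv n (i + 1) i p.1, mv n i (i + 1) p.2), true) else (p, false) := rfl

lemma midmap_true (i : ℕ) (p : SIdx n × SIdx n) :
    midmap n i (p, true) =
      if i ∉ (p.2 : Finset ℕ) ∧ i + 1 ∈ (p.2 : Finset ℕ) then
        ((mv n i (i + 1) p.1, mv n (i + 1) i p.2), false) else (p, true) := rfl

/-- The involution for the case `i = n`. -/
def topmap (n : ℕ) (q : (SIdx n × SIdx n) × Bool) : (SIdx n × SIdx n) × Bool :=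
  match q.2 with
  | false =>
      if n - 1 ∉ (q.1.1 : Finset ℕ) ∧ n ∉ (q.1.1 : Finset ℕ) then
        ((mvI n q.1.1, mvD n q.1.2), true) else q
  | true =>
      if n - 1 ∉ (q.1.2 : Finset ℕ) ∧ n ∉ (q.1.2 : Finset ℕ) then
        ((mvD n q.1.1, mvI n q.1.2), false) else q

lemma topmap_false (p : SIdx n × SIdx n) :
    topmap n (p, false) =
      if n - 1 ∉ (p.1 : Finset ℕ) ∧ n ∉ (p.1 : Finset ℕ) then
        ((mvI n p.1, mvD n p.2), true) else (p, false) := rfl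

lemma topmap_true (p : SIdx n × SIdx n) :
    topmap n (p, true) =
      if n - 1 ∉ (p.2 : Finset ℕ) ∧ n ∉ (p.2 : Finset ℕ) then
        ((mvD n p.1, mvI n p.2), false) else (p, true) := rfl


section Vals

variable {n : ℕ}

lemma other_facts {i : ℕ} (hi1 : 1 ≤ i) (hin : i + 1 ≤ n) {A B : SIdx n}
    (hU : (A : Finset ℕ) ∪ (B : Finset ℕ) = Finset.Icc 1 n)
    (hI : (A : Finset ℕ) ∩ (B : Finset ℕ) = {1})
    (h1 : i ∉ (A : Finset ℕ)) (h2 : i + 1 ∈ (A : Finset ℕ)) :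
    i ∈ (B : Finset ℕ) ∧ i + 1 ∉ (B : Finset ℕ) := by
  constructor
  · have hm : i ∈ (A : Finset ℕ) ∪ (B : Finset ℕ) := by
      rw [hU]; exact Finset.mem_Icc.2 ⟨hi1, by omega⟩
    exact (Finset.mem_union.1 hm).resolve_left h1
  · intro hc
    have hm : i + 1 ∈ (A : Finset ℕ) ∩ (B : Finset ℕ) := Finset.mem_inter.2 ⟨h2, hc⟩
    rw [hI, Finset.mem_singleton] at hm
    omega

lemma top_other (hn3 : 3 ≤ n) {A B : SIdx n}
    (hU : (A : Finset ℕ) ∪ (B : Finset ℕ) = Finset.Icc 1 n)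
    (hI : (A : Finset ℕ) ∩ (B : Finset ℕ) = {1})
    (h1 : n - 1 ∉ (A : Finset ℕ)) (h2 : n ∉ (A : Finset ℕ)) :
    n - 1 ∈ (B : Finset ℕ) ∧ n ∈ (B : Finset ℕ) := by
  constructor
  · have hm : n - 1 ∈ (A : Finset ℕ) ∪ (B : Finset ℕ) := by
      rw [hU]; exact Finset.mem_Icc.2 ⟨by omega, by omega⟩
    exact (Finset.mem_union.1 hm).resolve_left h1
  · have hm : n ∈ (A : Finset ℕ) ∪ (B : Finset ℕ) := by
      rw [hU]; exact Finset.mem_Icc.2 ⟨by omega, le_refl n⟩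
    exact (Finset.mem_union.1 hm).resolve_left h2

lemma mv_not_mem {i : ℕ} (hi1I : i + 1 ∈ Finset.Icc 1 n) (B : SIdx n) :
    i ∉ (mv n i (i + 1) B : Finset ℕ) := by
  rw [coe_mv hi1I]
  intro hc
  rcases Finset.mem_insert.1 hc with h | h
  · omega
  · exact (Finset.mem_erase.1 h).1 rfl

lemma mv_mem {i : ℕ} (hi1I : i + 1 ∈ Finset.Icc 1 n) (B : SIdx n) :
    i + 1 ∈ (mv n i (i + 1) B : Finset ℕ) := by
  rw [coe_mv hi1I]; exact Finset.mem_insert_self _ _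

lemma mid_val {i : ℕ} (hii : i ∈ Finset.Icc 1 n) (hin : i + 1 ≤ n) (hne : i ≠ n)
    {A B : SIdx n} (hU : (A : Finset ℕ) ∪ (B : Finset ℕ) = Finset.Icc 1 n)
    (hI : (A : Finset ℕ) ∩ (B : Finset ℕ) = {1})
    (h1 : i ∉ (A : Finset ℕ)) (h2 : i + 1 ∈ (A : Finset ℕ)) :
    Ft n i ((A, B), false) + Ft n i ((mv n (i + 1) i A, mv n i (i + 1) B), true) = 0 := by
  have hi1 : 1 ≤ i := (Finset.mem_Icc.1 hii).1
  have hi1I : i + 1 ∈ Finset.Icc 1 n := Finset.mem_Icc.2 ⟨by omega, hin⟩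
  obtain ⟨hiB, hi1B⟩ := other_facts hi1 hin hU hI h1 h2
  rw [Ft_false, Ft_true]
  rw [Xop_mid hii hne h1 h2 (mv n (i + 1) i A) (coe_mv hii A)]
  rw [Xop_mid hii hne (mv_not_mem hi1I B) (mv_mem hi1I B) B (by
    rw [coe_mv hi1I,
      Finset.erase_insert (fun hc => hi1B (Finset.mem_of_mem_erase hc)),
      Finset.insert_erase hiB])]
  have hI1 : I1 n ((mv n (i + 1) i A : SIdx n) : Finset ℕ) = I1 n (A : Finset ℕ) - 1 := by
    rw [coe_mv hii]; exact I1_mid h1 h2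
  rw [hI1, sign_sub_one, ← add_smul]
  simp

lemma mid_val' {i : ℕ} (hii : i ∈ Finset.Icc 1 n) (hin : i + 1 ≤ n) (hne : i ≠ n)
    {A B : SIdx n} (hU : (A : Finset ℕ) ∪ (B : Finset ℕ) = Finset.Icc 1 n)
    (hI : (A : Finset ℕ) ∩ (B : Finset ℕ) = {1})
    (h1 : i ∉ (B : Finset ℕ)) (h2 : i + 1 ∈ (B : Finset ℕ)) :
    Ft n i ((A, B), true) + Ft n i ((mv n i (i + 1) A, mv n (i + 1) i B), false) = 0 := by
  have hi1 : 1 ≤ i := (Finset.mem_Icc.1 hii).1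
  have hi1I : i + 1 ∈ Finset.Icc 1 n := Finset.mem_Icc.2 ⟨by omega, hin⟩
  obtain ⟨hiA, hi1A⟩ := other_facts hi1 hin (by rw [Finset.union_comm]; exact hU)
    (by rw [Finset.inter_comm]; exact hI) h1 h2
  rw [Ft_true, Ft_false]
  rw [Xop_mid hii hne h1 h2 (mv n (i + 1) i B) (coe_mv hii B)]
  rw [Xop_mid hii hne (mv_not_mem hi1I A) (mv_mem hi1I A) A (by
    rw [coe_mv hi1I,
      Finset.erase_insert (fun hc => hi1A (Finset.mem_of_mem_erase hc)),
      Finset.insert_erase hiA])]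
  have hI1 : I1 n ((mv n i (i + 1) A : SIdx n) : Finset ℕ) = I1 n (A : Finset ℕ) + 1 := by
    rw [coe_mv hi1I]; exact I1_mid' hiA hi1A
  rw [hI1, sign_add_one, ← add_smul]
  simp

lemma mvD_not_mem1 (B : SIdx n) : n - 1 ∉ (mvD n B : Finset ℕ) := by
  rw [coe_mvD]; exact Finset.notMem_erase _ _

lemma mvD_not_mem2 (hn2 : 2 ≤ n) (B : SIdx n) : n ∉ (mvD n B : Finset ℕ) := by
  rw [coe_mvD]
  intro hc
  exact Finset.notMem_erase n _ (Finset.mem_of_mem_erase hc)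

lemma top_val (hn3 : 3 ≤ n) {A B : SIdx n}
    (hU : (A : Finset ℕ) ∪ (B : Finset ℕ) = Finset.Icc 1 n)
    (hI : (A : Finset ℕ) ∩ (B : Finset ℕ) = {1})
    (h1 : n - 1 ∉ (A : Finset ℕ)) (h2 : n ∉ (A : Finset ℕ)) :
    Ft n n ((A, B), false) + Ft n n ((mvI n A, mvD n B), true) = 0 := by
  have hn2 : 2 ≤ n := by omega
  obtain ⟨hB1, hB2⟩ := top_other hn3 hU hI h1 h2
  rw [Ft_false, Ft_true]
  rw [Xop_top hn2 h1 h2 (mvI n A) (coe_mvI hn2 A)]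
  rw [Xop_top hn2 (mvD_not_mem1 B) (mvD_not_mem2 hn2 B) B (by
    rw [coe_mvD, Finset.insert_erase (Finset.mem_erase.2 ⟨by omega, hB1⟩),
      Finset.insert_erase hB2])]
  have hI1 : I1 n ((mvI n A : SIdx n) : Finset ℕ) = I1 n (A : Finset ℕ) - 1 := by
    rw [coe_mvI hn2]; exact I1_top hn2 h1 h2
  rw [TensorProduct.neg_tmul, TensorProduct.tmul_neg, smul_neg, smul_neg, hI1, sign_sub_one]
  simp

lemma top_val' (hn3 : 3 ≤ n) {A B : SIdx n}
    (hU : (A : Finset ℕ) ∪ (B : Finset ℕ) = Finset.Icc 1 n)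
    (hI : (A : Finset ℕ) ∩ (B : Finset ℕ) = {1})
    (h1 : n - 1 ∉ (B : Finset ℕ)) (h2 : n ∉ (B : Finset ℕ)) :
    Ft n n ((A, B), true) + Ft n n ((mvD n A, mvI n B), false) = 0 := by
  have hn2 : 2 ≤ n := by omega
  obtain ⟨hA1, hA2⟩ := top_other hn3 (by rw [Finset.union_comm]; exact hU)
    (by rw [Finset.inter_comm]; exact hI) h1 h2
  rw [Ft_true, Ft_false]
  rw [Xop_top hn2 h1 h2 (mvI n B) (coe_mvI hn2 B)]
  rw [Xop_top hn2 (mvD_not_mem1 A) (mvD_not_mem2 hn2 A) A (by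
    rw [coe_mvD, Finset.insert_erase (Finset.mem_erase.2 ⟨by omega, hA1⟩),
      Finset.insert_erase hA2])]
  have hI1 : I1 n ((mvD n A : SIdx n) : Finset ℕ) = I1 n (A : Finset ℕ) + 1 := by
    rw [coe_mvD]; exact I1_top' hn2 hA1 hA2
  rw [TensorProduct.tmul_neg, TensorProduct.neg_tmul, smul_neg, smul_neg, hI1, sign_add_one]
  simp

end Vals

section Mains

variable {n : ℕ}

lemma main_mid {i : ℕ} (hi1 : 1 ≤ i) (hin : i < n)
    (Ω : Finset (SIdx n × SIdx n))
    (hmem : ∀ p : SIdx n × SIdx n, p ∈ Ω ↔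
      ((p.1 : Finset ℕ) ∪ (p.2 : Finset ℕ) = Finset.Icc 1 n ∧
       (p.1 : Finset ℕ) ∩ (p.2 : Finset ℕ) = {1} ∧ Odd (p.1 : Finset ℕ).card)) :
    ((∑ p ∈ Ω, ((-1 : ℂ) ^ (I1 n (p.1 : Finset ℕ))) • (Xop n i (eB n p.1) ⊗ₜ[ℂ] eB n p.2))
      + ∑ p ∈ Ω, ((-1 : ℂ) ^ (I1 n (p.1 : Finset ℕ))) • (eB n p.1 ⊗ₜ[ℂ] Xop n i (eB n p.2)))
      = 0 := by
  have hii : i ∈ Finset.Icc 1 n := Finset.mem_Icc.2 ⟨hi1, by omega⟩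
  have hi1I : i + 1 ∈ Finset.Icc 1 n := Finset.mem_Icc.2 ⟨by omega, by omega⟩
  have hne : i ≠ n := by omega
  have hprod : ∑ q ∈ Ω ×ˢ (Finset.univ : Finset Bool), Ft n i q
      = ((∑ p ∈ Ω, ((-1 : ℂ) ^ (I1 n (p.1 : Finset ℕ))) •
            (Xop n i (eB n p.1) ⊗ₜ[ℂ] eB n p.2))
        + ∑ p ∈ Ω, ((-1 : ℂ) ^ (I1 n (p.1 : Finset ℕ))) •
            (eB n p.1 ⊗ₜ[ℂ] Xop n i (eB n p.2))) := by
    rw [Finset.sum_product, ← Finset.sum_add_distrib]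
    refine Finset.sum_congr rfl fun p _ => ?_
    rw [Fintype.sum_bool, Ft_true, Ft_false, add_comm]
  rw [← hprod]
  refine Finset.sum_involution (fun q _ => midmap n i q) ?_ ?_ ?_ ?_
  · rintro ⟨⟨A, B⟩, b⟩ hq
    obtain ⟨hU, hI, hodd⟩ := (hmem (A, B)).1 (Finset.mem_product.1 hq).1
    have hU' : (A : Finset ℕ) ∪ (B : Finset ℕ) = Finset.Icc 1 n := hU
    have hI' : (A : Finset ℕ) ∩ (B : Finset ℕ) = {1} := hI
    cases b
    all_goals beta_reduce
    · rw [midmap_false]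
      split_ifs with hc
      · exact mid_val hii (by omega) hne hU' hI' hc.1 hc.2
      · have h0 : Ft n i ((A, B), false) = 0 := by
          rw [Ft_false, Xop_mid_zero hii hne (by
            rcases not_and_or.1 hc with h | h
            · exact Or.inl (not_not.1 h)
            · exact Or.inr h), TensorProduct.zero_tmul, smul_zero]
        rw [h0, add_zero]
    · rw [midmap_true]
      split_ifs with hc
      · exact mid_val' hii (by omega) hne hU' hI' hc.1 hc.2
      · have h0 : Ft n i ((A, B), true) = 0 := by
          rw [Ft_true, Xop_mid_zero hii hne (by
            rcases not_and_or.1 hc with h | h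
            · exact Or.inl (not_not.1 h)
            · exact Or.inr h), TensorProduct.tmul_zero, smul_zero]
        rw [h0, add_zero]
  · rintro ⟨⟨A, B⟩, b⟩ hq hne0
    cases b
    all_goals beta_reduce
    · rw [midmap_false]
      split_ifs with hc
      · intro h
        exact Bool.noConfusion (congrArg Prod.snd h)
      · exfalso
        apply hne0
        rw [Ft_false, Xop_mid_zero hii hne (by
          rcases not_and_or.1 hc with h | h
          · exact Or.inl (not_not.1 h)
          · exact Or.inr h), TensorProduct.zero_tmul, smul_zero]
    · rw [midmap_true]
      split_ifs with hc
      · intro h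
        exact Bool.noConfusion (congrArg Prod.snd h)
      · exfalso
        apply hne0
        rw [Ft_true, Xop_mid_zero hii hne (by
          rcases not_and_or.1 hc with h | h
          · exact Or.inl (not_not.1 h)
          · exact Or.inr h), TensorProduct.tmul_zero, smul_zero]
  · rintro ⟨⟨A, B⟩, b⟩ hq
    obtain ⟨hU, hI, hodd⟩ := (hmem (A, B)).1 (Finset.mem_product.1 hq).1
    have hU' : (A : Finset ℕ) ∪ (B : Finset ℕ) = Finset.Icc 1 n := hU
    have hI' : (A : Finset ℕ) ∩ (B : Finset ℕ) = {1} := hI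
    have hoddA : Odd (A : Finset ℕ).card := hodd
    cases b
    all_goals beta_reduce
    · rw [midmap_false]
      split_ifs with hc
      · refine Finset.mem_product.2 ⟨(hmem _).2 ⟨?_, ?_, ?_⟩, Finset.mem_univ _⟩
        · show (mv n (i + 1) i A : Finset ℕ) ∪ (mv n i (i + 1) B : Finset ℕ) = Finset.Icc 1 n
          rw [coe_mv hii, coe_mv hi1I]
          exact (mid_mem hi1 hU' hI' (by omega) hc.1 hc.2).1
        · show (mv n (i + 1) i A : Finset ℕ) ∩ (mv n i (i + 1) B : Finset ℕ) = {1}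
          rw [coe_mv hii, coe_mv hi1I]
          exact (mid_mem hi1 hU' hI' (by omega) hc.1 hc.2).2
        · show Odd ((mv n (i + 1) i A : SIdx n) : Finset ℕ).card
          have hcc1 : i ∉ (A : Finset ℕ) := hc.1
          have hcc2 : i + 1 ∈ (A : Finset ℕ) := hc.2
          rw [coe_mv hii,
            Finset.card_insert_of_notMem (fun hcc => hcc1 (Finset.mem_of_mem_erase hcc)),
            Finset.card_erase_of_mem hcc2]
          have hpos : 1 ≤ (A : Finset ℕ).card := Finset.card_pos.2 ⟨i + 1, hc.2⟩
          obtain ⟨m, hm⟩ := hoddA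
          have hm' : (A : Finset ℕ).card = 2 * m + 1 := hm
          exact ⟨m, by omega⟩
      · exact hq
    · rw [midmap_true]
      split_ifs with hc
      · obtain ⟨hiA, hi1A⟩ := other_facts hi1 (by omega) (by rw [Finset.union_comm]; exact hU')
          (by rw [Finset.inter_comm]; exact hI') hc.1 hc.2
        refine Finset.mem_product.2 ⟨(hmem _).2 ⟨?_, ?_, ?_⟩, Finset.mem_univ _⟩
        · show (mv n i (i + 1) A : Finset ℕ) ∪ (mv n (i + 1) i B : Finset ℕ) = Finset.Icc 1 n
          rw [coe_mv hi1I, coe_mv hii, Finset.union_comm]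
          exact (mid_mem hi1 (by rw [Finset.union_comm]; exact hU')
            (by rw [Finset.inter_comm]; exact hI') (by omega) hc.1 hc.2).1
        · show (mv n i (i + 1) A : Finset ℕ) ∩ (mv n (i + 1) i B : Finset ℕ) = {1}
          rw [coe_mv hi1I, coe_mv hii, Finset.inter_comm]
          exact (mid_mem hi1 (by rw [Finset.union_comm]; exact hU')
            (by rw [Finset.inter_comm]; exact hI') (by omega) hc.1 hc.2).2
        · show Odd ((mv n i (i + 1) A : SIdx n) : Finset ℕ).card
          rw [coe_mv hi1I,
            Finset.card_insert_of_notMem (fun hcc => hi1A (Finset.mem_of_mem_erase hcc)),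
            Finset.card_erase_of_mem hiA]
          have hpos : 1 ≤ (A : Finset ℕ).card := Finset.card_pos.2 ⟨i, hiA⟩
          obtain ⟨m, hm⟩ := hoddA
          have hm' : (A : Finset ℕ).card = 2 * m + 1 := hm
          exact ⟨m, by omega⟩
      · exact hq
  · rintro ⟨⟨A, B⟩, b⟩ hq
    obtain ⟨hU, hI, hodd⟩ := (hmem (A, B)).1 (Finset.mem_product.1 hq).1
    have hU' : (A : Finset ℕ) ∪ (B : Finset ℕ) = Finset.Icc 1 n := hU
    have hI' : (A : Finset ℕ) ∩ (B : Finset ℕ) = {1} := hI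
    cases b
    all_goals beta_reduce
    · rw [midmap_false]
      split_ifs with hc
      · obtain ⟨hiB, hi1B⟩ := other_facts hi1 (by omega) hU' hI' hc.1 hc.2
        rw [midmap_true, if_pos ⟨mv_not_mem hi1I B, mv_mem hi1I B⟩,
          mv_mv hii hi1I hc.2 hc.1, mv_mv hi1I hii hiB hi1B]
      · rw [midmap_false, if_neg hc]
    · rw [midmap_true]
      split_ifs with hc
      · obtain ⟨hiA, hi1A⟩ := other_facts hi1 (by omega) (by rw [Finset.union_comm]; exact hU')
          (by rw [Finset.inter_comm]; exact hI') hc.1 hc.2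
        rw [midmap_false, if_pos ⟨mv_not_mem hi1I A, mv_mem hi1I A⟩,
          mv_mv hi1I hii hiA hi1A, mv_mv hii hi1I hc.2 hc.1]
      · rw [midmap_true, if_neg hc]

lemma main_top (hn3 : 3 ≤ n)
    (Ω : Finset (SIdx n × SIdx n))
    (hmem : ∀ p : SIdx n × SIdx n, p ∈ Ω ↔
      ((p.1 : Finset ℕ) ∪ (p.2 : Finset ℕ) = Finset.Icc 1 n ∧
       (p.1 : Finset ℕ) ∩ (p.2 : Finset ℕ) = {1} ∧ Odd (p.1 : Finset ℕ).card)) :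
    ((∑ p ∈ Ω, ((-1 : ℂ) ^ (I1 n (p.1 : Finset ℕ))) • (Xop n n (eB n p.1) ⊗ₜ[ℂ] eB n p.2))
      + ∑ p ∈ Ω, ((-1 : ℂ) ^ (I1 n (p.1 : Finset ℕ))) • (eB n p.1 ⊗ₜ[ℂ] Xop n n (eB n p.2)))
      = 0 := by
  have hn2 : 2 ≤ n := by omega
  have hprod : ∑ q ∈ Ω ×ˢ (Finset.univ : Finset Bool), Ft n n q
      = ((∑ p ∈ Ω, ((-1 : ℂ) ^ (I1 n (p.1 : Finset ℕ))) •
            (Xop n n (eB n p.1) ⊗ₜ[ℂ] eB n p.2))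
        + ∑ p ∈ Ω, ((-1 : ℂ) ^ (I1 n (p.1 : Finset ℕ))) •
            (eB n p.1 ⊗ₜ[ℂ] Xop n n (eB n p.2))) := by
    rw [Finset.sum_product, ← Finset.sum_add_distrib]
    refine Finset.sum_congr rfl fun p _ => ?_
    rw [Fintype.sum_bool, Ft_true, Ft_false, add_comm]
  rw [← hprod]
  refine Finset.sum_involution (fun q _ => topmap n q) ?_ ?_ ?_ ?_
  · rintro ⟨⟨A, B⟩, b⟩ hq
    obtain ⟨hU, hI, hodd⟩ := (hmem (A, B)).1 (Finset.mem_product.1 hq).1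
    have hU' : (A : Finset ℕ) ∪ (B : Finset ℕ) = Finset.Icc 1 n := hU
    have hI' : (A : Finset ℕ) ∩ (B : Finset ℕ) = {1} := hI
    cases b
    all_goals beta_reduce
    · rw [topmap_false]
      split_ifs with hc
      · exact top_val hn3 hU' hI' hc.1 hc.2
      · have h0 : Ft n n ((A, B), false) = 0 := by
          rw [Ft_false, Xop_top_zero hn2 (by
            rcases not_and_or.1 hc with h | h
            · exact Or.inl (not_not.1 h)
            · exact Or.inr (not_not.1 h)), TensorProduct.zero_tmul, smul_zero]
        rw [h0, add_zero]
    · rw [topmap_true]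
      split_ifs with hc
      · exact top_val' hn3 hU' hI' hc.1 hc.2
      · have h0 : Ft n n ((A, B), true) = 0 := by
          rw [Ft_true, Xop_top_zero hn2 (by
            rcases not_and_or.1 hc with h | h
            · exact Or.inl (not_not.1 h)
            · exact Or.inr (not_not.1 h)), TensorProduct.tmul_zero, smul_zero]
        rw [h0, add_zero]
  · rintro ⟨⟨A, B⟩, b⟩ hq hne0
    cases b
    all_goals beta_reduce
    · rw [topmap_false]
      split_ifs with hc
      · intro h
        exact Bool.noConfusion (congrArg Prod.snd h)
      · exfalso
        apply hne0
        rw [Ft_false, Xop_top_zero hn2 (by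
          rcases not_and_or.1 hc with h | h
          · exact Or.inl (not_not.1 h)
          · exact Or.inr (not_not.1 h)), TensorProduct.zero_tmul, smul_zero]
    · rw [topmap_true]
      split_ifs with hc
      · intro h
        exact Bool.noConfusion (congrArg Prod.snd h)
      · exfalso
        apply hne0
        rw [Ft_true, Xop_top_zero hn2 (by
          rcases not_and_or.1 hc with h | h
          · exact Or.inl (not_not.1 h)
          · exact Or.inr (not_not.1 h)), TensorProduct.tmul_zero, smul_zero]
  · rintro ⟨⟨A, B⟩, b⟩ hq
    obtain ⟨hU, hI, hodd⟩ := (hmem (A, B)).1 (Finset.mem_product.1 hq).1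
    have hU' : (A : Finset ℕ) ∪ (B : Finset ℕ) = Finset.Icc 1 n := hU
    have hI' : (A : Finset ℕ) ∩ (B : Finset ℕ) = {1} := hI
    have hoddA : Odd (A : Finset ℕ).card := hodd
    cases b
    all_goals beta_reduce
    · rw [topmap_false]
      split_ifs with hc
      · refine Finset.mem_product.2 ⟨(hmem _).2 ⟨?_, ?_, ?_⟩, Finset.mem_univ _⟩
        · show (mvI n A : Finset ℕ) ∪ (mvD n B : Finset ℕ) = Finset.Icc 1 n
          rw [coe_mvI hn2, coe_mvD]
          exact (top_mem hn3 hU' hI' hc.1 hc.2).1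
        · show (mvI n A : Finset ℕ) ∩ (mvD n B : Finset ℕ) = {1}
          rw [coe_mvI hn2, coe_mvD]
          exact (top_mem hn3 hU' hI' hc.1 hc.2).2
        · show Odd ((mvI n A : SIdx n) : Finset ℕ).card
          have hcc1 : n - 1 ∉ (A : Finset ℕ) := hc.1
          have hcc2 : n ∉ (A : Finset ℕ) := hc.2
          rw [coe_mvI hn2,
            Finset.card_insert_of_notMem (by
              simp only [Finset.mem_insert, not_or]
              exact ⟨by omega, hcc2⟩),
            Finset.card_insert_of_notMem hcc1]
          obtain ⟨m, hm⟩ := hoddA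
          have hm' : (A : Finset ℕ).card = 2 * m + 1 := hm
          exact ⟨m + 1, by omega⟩
      · exact hq
    · rw [topmap_true]
      split_ifs with hc
      · obtain ⟨hA1, hA2⟩ := top_other hn3 (by rw [Finset.union_comm]; exact hU')
          (by rw [Finset.inter_comm]; exact hI') hc.1 hc.2
        refine Finset.mem_product.2 ⟨(hmem _).2 ⟨?_, ?_, ?_⟩, Finset.mem_univ _⟩
        · show (mvD n A : Finset ℕ) ∪ (mvI n B : Finset ℕ) = Finset.Icc 1 n
          rw [coe_mvI hn2, coe_mvD, Finset.union_comm]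
          exact (top_mem hn3 (by rw [Finset.union_comm]; exact hU')
            (by rw [Finset.inter_comm]; exact hI') hc.1 hc.2).1
        · show (mvD n A : Finset ℕ) ∩ (mvI n B : Finset ℕ) = {1}
          rw [coe_mvI hn2, coe_mvD, Finset.inter_comm]
          exact (top_mem hn3 (by rw [Finset.union_comm]; exact hU')
            (by rw [Finset.inter_comm]; exact hI') hc.1 hc.2).2
        · show Odd ((mvD n A : SIdx n) : Finset ℕ).card
          rw [coe_mvD,
            Finset.card_erase_of_mem (Finset.mem_erase.2 ⟨by omega, hA1⟩),
            Finset.card_erase_of_mem hA2]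
          have hcard2 : 2 ≤ (A : Finset ℕ).card :=
            Finset.one_lt_card.2 ⟨n - 1, hA1, n, hA2, by omega⟩
          obtain ⟨m, hm⟩ := hoddA
          have hm' : (A : Finset ℕ).card = 2 * m + 1 := hm
          exact ⟨m - 1, by omega⟩
      · exact hq
  · rintro ⟨⟨A, B⟩, b⟩ hq
    obtain ⟨hU, hI, hodd⟩ := (hmem (A, B)).1 (Finset.mem_product.1 hq).1
    have hU' : (A : Finset ℕ) ∪ (B : Finset ℕ) = Finset.Icc 1 n := hU
    have hI' : (A : Finset ℕ) ∩ (B : Finset ℕ) = {1} := hI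
    cases b
    all_goals beta_reduce
    · rw [topmap_false]
      split_ifs with hc
      · obtain ⟨hB1, hB2⟩ := top_other hn3 hU' hI' hc.1 hc.2
        rw [topmap_true, if_pos ⟨mvD_not_mem1 B, mvD_not_mem2 hn2 B⟩]
        have e1 : mvD n (mvI n A) = A := by
          apply Subtype.ext
          rw [coe_mvD, coe_mvI hn2,
            Finset.erase_insert (by
              simp only [Finset.mem_insert, not_or]
              exact ⟨by omega, hc.2⟩),
            Finset.erase_insert hc.1]
        have e2 : mvI n (mvD n B) = B := by
          apply Subtype.ext
          rw [coe_mvI hn2, coe_mvD,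
            Finset.insert_erase (Finset.mem_erase.2 ⟨by omega, hB1⟩),
            Finset.insert_erase hB2]
        rw [e1, e2]
      · rw [topmap_false, if_neg hc]
    · rw [topmap_true]
      split_ifs with hc
      · obtain ⟨hA1, hA2⟩ := top_other hn3 (by rw [Finset.union_comm]; exact hU')
          (by rw [Finset.inter_comm]; exact hI') hc.1 hc.2
        rw [topmap_false, if_pos ⟨mvD_not_mem1 A, mvD_not_mem2 hn2 A⟩]
        have e1 : mvI n (mvD n A) = A := by
          apply Subtype.ext
          rw [coe_mvI hn2, coe_mvD,
            Finset.insert_erase (Finset.mem_erase.2 ⟨by omega, hA1⟩),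
            Finset.insert_erase hA2]
        have e2 : mvD n (mvI n B) = B := by
          apply Subtype.ext
          rw [coe_mvD, coe_mvI hn2,
            Finset.erase_insert (by
              simp only [Finset.mem_insert, not_or]
              exact ⟨by omega, hc.2⟩),
            Finset.erase_insert hc.1]
        rw [e1, e2]
      · rw [topmap_true, if_neg hc]

end Mains

end Aux

/-- `ẽ₁` is annihilated by `X_i ⊗ id + id ⊗ X_i` for every `i ∈ {1,…,n}`, i.e. it is a
highest weight vector of weight `L₁` in `U₊ ⊗ U₊`. -/
theorem stmt9 (n : ℕ) (hn : 3 ≤ n) (hodd : Odd n) (i : ℕ) (hi : i ∈ Finset.Icc 1 n) :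
    (LinearMap.rTensor (Sp n) (Xop n i) + LinearMap.lTensor (Sp n) (Xop n i)) (e1tilde n)
      = 0 := by
  classical
  rw [LinearMap.add_apply]
  simp only [e1tilde, map_sum, map_smul, LinearMap.rTensor_tmul, LinearMap.lTensor_tmul]
  rcases eq_or_ne i n with rfl | hne
  · exact main_top hn _ (fun p => by simp [Finset.mem_filter])
  · obtain ⟨h1, h2⟩ := Finset.mem_Icc.1 hi
    exact main_mid h1 (by omega) _ (fun p => by simp [Finset.mem_filter])

end
end

section
/- Let n ≥ 3 be an odd integer. The vector Σ_{i=1}^n e_{{i}} ⊗ u_{n+i} ∈ S ⊗ V satisfies (Y_k ⊗ id_V + id_S ⊗ Y_k^V)(Σ_{i=1}^n e_{{i}} ⊗ u_{n+i}) = 0 for every k ∈ {1,…,n}; that is, it is a lowest weight vector (of weight −(L_1+⋯+L_n)/2) spanning the copy of the half-spin representation U₋ inside U₊ ⊗ V. -/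
open scoped TensorProduct Classical

noncomputable section

/-- `I_i(X) = I₁(X) + |{k ∈ X : k < i}| − (i−1)`. -/
def Ilow (n i : ℕ) (X : Finset ℕ) : ℤ :=
  I1 n X + ((X.filter (fun k => k < i)).card : ℤ) - ((i : ℤ) - 1)

/-- The lowering Chevalley generator: `Y_i = −a_i a_{i+1}†` for `1 ≤ i ≤ n−1` and
`Y_n = a_n a_{n−1}`. -/
def Yop (n i : ℕ) : Sp n →ₗ[ℂ] Sp n :=
  if i = n then (aop n n).comp (aop n (n - 1))
  else -((aop n i).comp (adag n (i + 1)))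

/-- `ẽ_i = Σ_{(X′,X″)∈Ω_i} σ_i(X′) e_{X′} ⊗ e_{X″}`, where `Ω_i` consists of pairs with
`X′ ∪ X″ = {1,…,n}`, `X′ ∩ X″ = {i}`, `|X′|` odd, and `σ_i(X) = (−1)^{I_i(X)}`. -/
def eTlow (n i : ℕ) : Sp n ⊗[ℂ] Sp n :=
  ∑ p ∈ Finset.univ.filter (fun p : SIdx n × SIdx n =>
      (p.1 : Finset ℕ) ∪ (p.2 : Finset ℕ) = Finset.Icc 1 n ∧
      (p.1 : Finset ℕ) ∩ (p.2 : Finset ℕ) = {i} ∧ Odd (p.1 : Finset ℕ).card),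
    ((-1 : ℂ) ^ (Ilow n i (p.1 : Finset ℕ))) • (eB n p.1 ⊗ₜ[ℂ] eB n p.2)

/-- `ẽ_{n+i} = (−1)^i Σ_{(X′,X″)∈Ω_{n+i}} σ_{n+i}(X′) e_{X′} ⊗ e_{X″}`, where `Ω_{n+i}`
consists of pairs of disjoint sets with `X′ ∪ X″ = {1,…,n} ∖ {i}` and `|X′|` odd, and
`σ_{n+i}(X) = (−1)^{I_{n+i}(X)}`. -/
def eThigh (n i : ℕ) : Sp n ⊗[ℂ] Sp n :=
  ((-1 : ℂ) ^ i) •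
    ∑ p ∈ Finset.univ.filter (fun p : SIdx n × SIdx n =>
        (p.1 : Finset ℕ) ∪ (p.2 : Finset ℕ) = (Finset.Icc 1 n) \ {i} ∧
        Disjoint (p.1 : Finset ℕ) (p.2 : Finset ℕ) ∧ Odd (p.1 : Finset ℕ).card),
      ((-1 : ℂ) ^ (Ihigh n i (p.1 : Finset ℕ))) • (eB n p.1 ⊗ₜ[ℂ] eB n p.2)

/-- The vector representation `V = ℂ^{2n}`; the coordinate `x` corresponds to the basis
vector `u_{x+1}` (1-based indexing). -/
abbrev Vsp (n : ℕ) : Type := Fin (2 * n) → ℂ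

/-- The basis vector `u_j` of `V` (1-based). -/
def uB (n j : ℕ) : Vsp n := fun x => if (x : ℕ) + 1 = j then 1 else 0

/-- The `l`-th coordinate functional on `V` (1-based). -/
def coordL (n l : ℕ) : Vsp n →ₗ[ℂ] ℂ where
  toFun f := ∑ x : Fin (2 * n), (if (x : ℕ) + 1 = l then 1 else 0) * f x
  map_add' f g := by simp [mul_add, Finset.sum_add_distrib]
  map_smul' a f := by
    simp only [Pi.smul_apply, smul_eq_mul, RingHom.id_apply, Finset.mul_sum]
    exact Finset.sum_congr rfl fun x _ => by ring

/-- The matrix unit `E_{kl}`, acting by `E_{kl} u_m = δ_{lm} u_k`. -/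
def matUnit (n k l : ℕ) : Vsp n →ₗ[ℂ] Vsp n := (coordL n l).smulRight (uB n k)

/-- The raising generator on `V`: `X_i = E_{i,i+1} − E_{n+i+1,n+i}` for `1 ≤ i ≤ n−1` and
`X_n = E_{n−1,2n} − E_{n,2n−1}`. -/
def XV (n i : ℕ) : Vsp n →ₗ[ℂ] Vsp n :=
  if i = n then matUnit n (n - 1) (2 * n) - matUnit n n (2 * n - 1)
  else matUnit n i (i + 1) - matUnit n (n + i + 1) (n + i)

/-- The lowering generator on `V`: `Y_i = E_{i+1,i} − E_{n+i,n+i+1}` for `1 ≤ i ≤ n−1` and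
`Y_n = E_{2n−1,n} − E_{2n,n−1}`. -/
def YV (n i : ℕ) : Vsp n →ₗ[ℂ] Vsp n :=
  if i = n then matUnit n (2 * n - 1) n - matUnit n (2 * n) (n - 1)
  else matUnit n (i + 1) i - matUnit n (n + i) (n + i + 1)

/-- The lowest weight vector `Σ_{i=1}^n e_{{i}} ⊗ u_{n+i} ∈ S ⊗ V`. -/
def lwSV (n : ℕ) : Sp n ⊗[ℂ] Vsp n :=
  ∑ i ∈ (Finset.Icc 1 n).attach,
    eB n ⟨{(i : ℕ)}, Finset.mem_powerset.2 (Finset.singleton_subset_iff.2 i.2)⟩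
      ⊗ₜ[ℂ] uB n (n + (i : ℕ))

/-! For `k < n`, on singletons `Y_k = −a_k a_{k+1}†` sends `e_{k}` to `e_{k+1}` and kills every
other `e_{i}`, while `Y_k^V` sends `u_{n+k+1}` to `−u_{n+k}` and kills every other `u_{n+i}`:
the two resulting multiples of `e_{k+1} ⊗ u_{n+k}` cancel. For `k = n`, `Y_n = a_n a_{n−1}`
annihilates the one-element sets and `Y_n^V` annihilates `u_{n+1}, …, u_{2n}`. -/

lemma coe_eraseIdx (n : ℕ) (X : SIdx n) (i : ℕ) :
    ((eraseIdx n X i : SIdx n) : Finset ℕ) = (X : Finset ℕ).erase i := rfl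

lemma coe_insertIdx (n : ℕ) (X : SIdx n) (i : ℕ) (h : i ∈ Finset.Icc 1 n) :
    ((insertIdx n X i h : SIdx n) : Finset ℕ) = insert i (X : Finset ℕ) := rfl

/-- `e_X` for an arbitrary `X : Finset ℕ`, free of membership proofs; it is `0` unless
`X ⊆ {1,…,n}`. -/
def eSet (n : ℕ) (X : Finset ℕ) : Sp n := fun Y => if (Y : Finset ℕ) = X then 1 else 0

lemma eB_eq_eSet (n : ℕ) (X : SIdx n) : eB n X = eSet n X := by
  funext Y
  exact (Pi.single_apply X 1 Y).trans (if_congr Subtype.ext_iff rfl rfl)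

lemma adag_eSet (n i : ℕ) (X : Finset ℕ) :
    adag n i (eSet n X) =
      if i ∈ X then 0 else (-1 : ℂ) ^ (X.filter (· < i)).card • eSet n (insert i X) := by
  funext Y
  simp only [adag, eSet, LinearMap.coe_mk, AddHom.coe_mk, coe_eraseIdx]
  by_cases hiX : i ∈ X
  · have : ∀ Z : Finset ℕ, Z.erase i ≠ X := fun Z h => Finset.notMem_erase i Z (h ▸ hiX)
    simp [hiX, this]
  · by_cases hY : (Y : Finset ℕ) = insert i X
    · simp [eSet, hiX, hY, Finset.erase_insert hiX]
    · have : i ∈ (Y : Finset ℕ) → (Y : Finset ℕ).erase i ≠ X := fun hi h =>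
        hY (h ▸ (Finset.insert_erase hi).symm)
      by_cases hi : i ∈ (Y : Finset ℕ) <;> simp [eSet, hiX, hY, hi, this]

lemma aop_eSet (n i : ℕ) {X : Finset ℕ} (hX : X ⊆ Finset.Icc 1 n) :
    aop n i (eSet n X) =
      if i ∈ X then (-1 : ℂ) ^ (X.filter (· < i)).card • eSet n (X.erase i) else 0 := by
  funext Y
  simp only [aop, eSet, LinearMap.coe_mk, AddHom.coe_mk, coe_insertIdx]
  by_cases hiX : i ∈ X
  · by_cases hY : (Y : Finset ℕ) = X.erase i
    · simp [eSet, hiX, hY, hX hiX, Finset.insert_erase hiX]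
    · have : i ∉ (Y : Finset ℕ) → insert i (Y : Finset ℕ) ≠ X := fun hi h =>
        hY (h ▸ (Finset.erase_insert hi).symm)
      simp +contextual [eSet, hiX, hY, this]
  · have : ∀ Z : Finset ℕ, insert i Z ≠ X := fun Z h => hiX (h ▸ Finset.mem_insert_self i Z)
    simp [hiX, this]

lemma Yop_eSet_singleton_of_lt {n k : ℕ} (hkn : k < n) {i : ℕ}
    (hi : i ∈ Finset.Icc 1 n) :
    Yop n k (eSet n {i}) = if i = k then eSet n {k + 1} else 0 := by
  rw [Yop, if_neg hkn.ne, LinearMap.neg_apply, LinearMap.comp_apply, adag_eSet]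
  by_cases hik1 : i = k + 1
  · simp [hik1]
  have hsub : insert (k + 1) {i} ⊆ Finset.Icc 1 n :=
    Finset.insert_subset (Finset.mem_Icc.2 ⟨by omega, hkn⟩) (Finset.singleton_subset_iff.2 hi)
  rw [if_neg (by simpa using Ne.symm hik1), map_smul, aop_eSet n k hsub]
  by_cases hik : i = k
  · subst hik
    have herase : (insert (i + 1) {i} : Finset ℕ).erase i = {i + 1} := by
      ext x; simp; omega
    have hfilter : (insert (i + 1) {i} : Finset ℕ).filter (· < i) = ∅ := by
      ext x; simp; omega
    simp [herase, hfilter, Finset.filter_singleton]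
  · have : k ∉ (insert (k + 1) {i} : Finset ℕ) := by simp; omega
    simp [hik, this]

lemma Yop_self_eSet_singleton {n i : ℕ} (hi : i ∈ Finset.Icc 1 n) :
    Yop n n (eSet n {i}) = 0 := by
  rw [Yop, if_pos rfl, LinearMap.comp_apply,
    aop_eSet n (n - 1) (Finset.singleton_subset_iff.2 hi)]
  split_ifs with h
  · rw [Finset.mem_singleton.1 h, Finset.erase_singleton, map_smul,
      aop_eSet n n (Finset.empty_subset _)]
    simp
  · exact map_zero _

lemma coordL_uB (n l : ℕ) {j : ℕ} (hj : j ∈ Finset.Icc 1 (2 * n)) :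
    coordL n l (uB n j) = if l = j then 1 else 0 := by
  obtain ⟨hj1, hj2⟩ := Finset.mem_Icc.1 hj
  have hsummand : ∀ x : Fin (2 * n), ((if (x : ℕ) + 1 = l then 1 else 0) * uB n j x : ℂ) =
      if x = ⟨j - 1, by omega⟩ then (if l = j then 1 else 0) else 0 := by
    intro x
    simp only [uB, Fin.ext_iff]
    split_ifs <;> first | (exfalso; omega) | simp
  simp only [coordL, LinearMap.coe_mk, AddHom.coe_mk, hsummand, Finset.sum_ite_eq',
    Finset.mem_univ, if_true]

lemma matUnit_uB (n k l : ℕ) {j : ℕ} (hj : j ∈ Finset.Icc 1 (2 * n)) :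
    matUnit n k l (uB n j) = if l = j then uB n k else 0 := by
  simp [matUnit, coordL_uB n l hj]

lemma YV_uB_of_lt {n k : ℕ} (hkn : k < n) {i : ℕ} (hi : i ∈ Finset.Icc 1 n) :
    YV n k (uB n (n + i)) = if i = k + 1 then -uB n (n + k) else 0 := by
  have hj : n + i ∈ Finset.Icc 1 (2 * n) := by simp at hi ⊢; omega
  rw [YV, if_neg hkn.ne, LinearMap.sub_apply, matUnit_uB _ _ _ hj, matUnit_uB _ _ _ hj,
    if_neg (by omega)]
  by_cases h : i = k + 1 <;> simp [h] <;> omega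

lemma YV_self_uB {n i : ℕ} (hi : i ∈ Finset.Icc 1 n) : YV n n (uB n (n + i)) = 0 := by
  have hj : n + i ∈ Finset.Icc 1 (2 * n) := by simp at hi ⊢; omega
  rw [YV, if_pos rfl, LinearMap.sub_apply, matUnit_uB _ _ _ hj, matUnit_uB _ _ _ hj]
  obtain ⟨hi1, -⟩ := Finset.mem_Icc.1 hi
  rw [if_neg (by omega), if_neg (by omega), sub_zero]

theorem stmt11_general (n : ℕ) (k : ℕ) (hk : k ∈ Finset.Icc 1 n) :
    (LinearMap.rTensor (Vsp n) (Yop n k) + LinearMap.lTensor (Sp n) (YV n k)) (lwSV n)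
      = 0 := by
  simp only [lwSV, map_sum, LinearMap.add_apply, LinearMap.rTensor_tmul,
    LinearMap.lTensor_tmul, eB_eq_eSet]
  rw [Finset.sum_attach (Finset.Icc 1 n) fun i =>
    Yop n k (eSet n {i}) ⊗ₜ[ℂ] uB n (n + i) + eSet n {i} ⊗ₜ[ℂ] YV n k (uB n (n + i))]
  rcases (Finset.mem_Icc.1 hk).2.lt_or_eq with hlt | rfl
  · have hk' : k + 1 ∈ Finset.Icc 1 n := Finset.mem_Icc.2 ⟨by omega, hlt⟩
    calc _ = ∑ i ∈ Finset.Icc 1 n, ((if i = k then eSet n {k + 1} ⊗ₜ[ℂ] uB n (n + k) else 0)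
              - if i = k + 1 then eSet n {k + 1} ⊗ₜ[ℂ] uB n (n + k) else 0) := by
          refine Finset.sum_congr rfl fun i hi => ?_
          rw [Yop_eSet_singleton_of_lt hlt hi, YV_uB_of_lt hlt hi]
          split_ifs <;> simp_all [TensorProduct.tmul_neg]
      _ = 0 := by simp [Finset.sum_sub_distrib, hk, hk']
  · refine Finset.sum_eq_zero fun i hi => ?_
    simp [Yop_self_eSet_singleton hi, YV_self_uB hi]

/-- `Σ_{i=1}^n e_{{i}} ⊗ u_{n+i}` is annihilated by `Y_k ⊗ id_V + id_S ⊗ Y_k^V` for every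
`k ∈ {1,…,n}`: it is a lowest weight vector spanning the copy of `U₋` inside `U₊ ⊗ V`. -/
theorem stmt11 (n : ℕ) (hn : 3 ≤ n) (hodd : Odd n) (k : ℕ) (hk : k ∈ Finset.Icc 1 n) :
    (LinearMap.rTensor (Vsp n) (Yop n k) + LinearMap.lTensor (Sp n) (YV n k)) (lwSV n)
      = 0 :=
  stmt11_general n k hk

end
end
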